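/- arXiv:2207.04352 — 7 statements merged into one kernel-verified Lean document; each statement's English description precedes it below -/
import Mathlib

section
/- Let t, r, s be integers with 2 ≤ t ≤ 10 and 1 ≤ r < s ≤ t. Then for every integer n ≥ 9, D_2(r,t;n) ≥ D_2(s,t;n). -/
/-!
Write `D₂(r,t;n) = ∑_c d(n, c t + r)`, where `d(n, m)` counts the partitions of `n` into distinct
parts having `m` as a part; it then suffices that `d(n, m + 1) ≤ d(n, m)` for `m ≥ 1`, `n ≥ 9`.
Partitions containing both `m` and `m + 1` cancel, and removing the part `m + 1` (resp. `m`)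
from the others reduces this to `q(N) ≤ q(N + 1)` for `N = n - m - 1`, where `q` counts
partitions into distinct parts avoiding `{m, m + 1}`.

Let `P = 2 ^ K` be the least power of two that is `m`, `m + 1`, or larger than `N + 1`. The
factors `1 + X ^ 2 ^ j`, `j < K`, of the generating function of `q` telescope against `1 - X`,
so `q(N + 1) - q(N) = q'(N + 1) - q'(N + 1 - P)`, where `q'` also avoids the powers of two
below `P`. Adding `P` to the largest part injects the partitions counted by `q'(N + 1 - P)` into
those counted by `q'(N + 1)` (when `N + 1 = P ≥ 8`, use the partition `{3, P - 3}` instead).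
-/

open Real

/-- The number of parts congruent to `r` modulo `t` among all `k`-regular
partitions of `n` (partitions where every part has multiplicity less than `k`). -/
def Dk (k r t n : ℕ) : ℕ :=
  ∑ p ∈ Finset.univ.filter
      (fun p : Nat.Partition n => ∀ i ∈ p.parts, p.parts.count i < k),
    Multiset.card (p.parts.filter (fun j => j % t = r % t))

open Finset PowerSeries
open scoped PowerSeries.WithPiTopology

theorem one_sub_mul_prod_one_add_pow_two_pow {R : Type*} [CommRing R] (x : R) (K : ℕ) :
    (1 - x) * ∏ j ∈ range K, (1 + x ^ 2 ^ j) = 1 - x ^ 2 ^ K := by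
  induction K with
  | zero => simp
  | succ K ih => rw [prod_range_succ, ← mul_assoc, ih, pow_succ, pow_mul]; ring

namespace Nat.Partition

def restrictedDistincts (n : ℕ) (p : ℕ → Prop) [DecidablePred p] : Finset n.Partition :=
  restricted n p ∩ distincts n

section GeneratingFunction

variable (R : Type*) [CommSemiring R] [TopologicalSpace R] [T2Space R]

theorem hasProd_powerSeriesMk_card_restrictedDistincts (p : ℕ → Prop) [DecidablePred p] :
    HasProd (fun i ↦ if p (i + 1) then 1 + X ^ (i + 1) else 1)
      (PowerSeries.mk fun n ↦ (#(restrictedDistincts n p) : R)) := by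
  convert! hasProd_genFun (fun i c ↦ if p i ∧ c = 1 then (1 : R) else 0) using 1
  · ext1 i
    split_ifs with h
    · rw [tsum_eq_single 0 (fun j hj ↦ by simp [hj])]
      simp [h]
    · simp [h]
  · simp_rw [genFun, restrictedDistincts, restricted, distincts, ← filter_and, card_filter,
      Finsupp.prod, prod_boole]
    congr! with n
    simp [Multiset.nodup_iff_count_eq_one, forall_and]

theorem powerSeriesMk_card_restrictedDistincts_eq_mul_prod [IsTopologicalSemiring R]
    (p : ℕ → Prop) [DecidablePred p] (B : Finset ℕ) (hB : ∀ b ∈ B, 0 < b ∧ p b) :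
    PowerSeries.mk (fun n ↦ (#(restrictedDistincts n p) : R)) =
      PowerSeries.mk (fun n ↦ (#(restrictedDistincts n (fun i ↦ p i ∧ i ∉ B)) : R)) *
        ∏ b ∈ B, (1 + X ^ b) := by
  have hBprod : HasProd (fun i ↦ if i + 1 ∈ B then 1 + X ^ (i + 1) else (1 : R⟦X⟧))
      (∏ b ∈ B, (1 + X ^ b)) := by
    have hinj : Set.InjOn (· + 1) ((· + 1) ⁻¹' (B : Set ℕ)) := (add_left_injective 1).injOn
    have h := hasProd_prod_of_ne_finset_one (L := SummationFilter.unconditional ℕ)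
      (s := B.preimage (· + 1) hinj)
      (f := fun i ↦ if i + 1 ∈ B then 1 + X ^ (i + 1) else (1 : R⟦X⟧))
      (fun i hi ↦ if_neg (by simpa using hi))
    rwa [prod_congr rfl fun i hi ↦ if_pos (mem_preimage.1 hi),
      prod_preimage (· + 1) B hinj (fun b ↦ 1 + X ^ b)
        fun b hb hb' ↦ absurd ⟨b - 1, Nat.sub_add_cancel (hB b hb).1⟩ hb'] at h
  refine (hasProd_powerSeriesMk_card_restrictedDistincts R p).unique ?_
  convert (hasProd_powerSeriesMk_card_restrictedDistincts R _).mul hBprod using 1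
  ext1 i
  by_cases hi : i + 1 ∈ B
  · simp [hi, (hB _ hi).2]
  · simp [hi]

end GeneratingFunction

theorem card_restrictedDistincts_succ_sub (p : ℕ → Prop) [DecidablePred p] (K N : ℕ)
    (hp : ∀ j < K, p (2 ^ j)) :
    (#(restrictedDistincts (N + 1) p) : ℤ) - #(restrictedDistincts N p) =
      #(restrictedDistincts (N + 1) (fun i ↦ p i ∧ i ∉ (range K).image (2 ^ ·))) -
        if 2 ^ K ≤ N + 1 then
          (#(restrictedDistincts (N + 1 - 2 ^ K) (fun i ↦ p i ∧ i ∉ (range K).image (2 ^ ·))) : ℤ)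
        else 0 := by
  have hsplit := powerSeriesMk_card_restrictedDistincts_eq_mul_prod ℤ p ((range K).image (2 ^ ·))
    (by simp only [mem_image, mem_range, forall_exists_index, and_imp, forall_apply_eq_imp_iff₂]
        exact fun j hj ↦ ⟨Nat.two_pow_pos j, hp j hj⟩)
  rw [prod_image fun i _ j _ h ↦ Nat.pow_right_injective le_rfl h] at hsplit
  have key := congrArg (coeff (N + 1)) (congrArg ((1 - X) * ·) hsplit)
  rw [mul_left_comm, one_sub_mul_prod_one_add_pow_two_pow, mul_comm _ (1 - _)] at key
  simpa [sub_mul, coeff_succ_X_mul, coeff_X_pow_mul'] using key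

theorem sup_parts_mem {n : ℕ} (q : n.Partition) (hn : n ≠ 0) : q.parts.sup ∈ q.parts := by
  obtain ⟨y, hy, hmax⟩ := Multiset.exists_max_image id
    (fun h ↦ hn (by simpa [h] using q.parts_sum.symm) : q.parts ≠ 0)
  rwa [le_antisymm (Multiset.sup_le.2 hmax) (Multiset.le_sup hy)]

def addToLargestPart {n : ℕ} (P : ℕ) (q : n.Partition) (hn : n ≠ 0) : (n + P).Partition where
  parts := (q.parts.sup + P) ::ₘ q.parts.erase q.parts.sup
  parts_pos hi := by
    rcases Multiset.mem_cons.1 hi with rfl | hi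
    · exact Nat.add_pos_left (q.parts_pos (q.sup_parts_mem hn)) P
    · exact q.parts_pos (Multiset.mem_of_mem_erase hi)
  parts_sum := by
    rw [Multiset.sum_cons, add_right_comm, ← Multiset.sum_cons,
      Multiset.cons_erase (q.sup_parts_mem hn), q.parts_sum]

theorem sup_parts_addToLargestPart {n : ℕ} (P : ℕ) (q : n.Partition) (hn : n ≠ 0) :
    (q.addToLargestPart P hn).parts.sup = q.parts.sup + P := by
  refine (Multiset.sup_cons _ _).trans (sup_eq_left.2 ?_)
  exact (Multiset.sup_mono (Multiset.erase_subset _ _)).trans (Nat.le_add_right _ _)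

theorem card_restrictedDistincts_le_add {p : ℕ → Prop} [DecidablePred p] {n : ℕ} (P : ℕ)
    (hn : n ≠ 0) (hp : ∀ a, 0 < a → p a → p (a + P)) :
    #(restrictedDistincts n p) ≤ #(restrictedDistincts (n + P) p) := by
  refine card_le_card_of_injOn (addToLargestPart P · hn) (fun q hq ↦ ?_) fun q _ q' _ h ↦ ?_
  · simp only [restrictedDistincts, restricted, distincts, coe_inter, coe_filter,
      Set.mem_inter_iff, Set.mem_ofPred_eq, mem_univ, true_and] at hq ⊢
    obtain ⟨hS, hnd⟩ := hq
    have hmax := q.sup_parts_mem hn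
    refine ⟨fun i hi ↦ ?_, Multiset.nodup_cons.2 ⟨fun hmem ↦ ?_, hnd.erase _⟩⟩
    · rcases Multiset.mem_cons.1 hi with rfl | hi
      · exact hp _ (q.parts_pos hmax) (hS _ hmax)
      · exact hS _ (Multiset.mem_of_mem_erase hi)
    · obtain rfl : P = 0 := by have := Multiset.le_sup (Multiset.mem_of_mem_erase hmem); omega
      exact hnd.notMem_erase hmem
  · have hsup := congrArg (·.parts.sup) h
    simp only [sup_parts_addToLargestPart, add_left_inj] at hsup
    have hparts := congrArg Nat.Partition.parts h
    simp only [addToLargestPart, hsup, Multiset.cons_inj_right] at hparts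
    ext1
    rw [← Multiset.cons_erase (q.sup_parts_mem hn), ← Multiset.cons_erase (q'.sup_parts_mem hn),
      hsup, hparts]

theorem card_restrictedDistincts_le_succ (p : ℕ → Prop) [DecidablePred p] (K N : ℕ)
    (hp : ∀ j < K, p (2 ^ j))
    (hle : 2 ^ K ≤ N + 1 →
      #(restrictedDistincts (N + 1 - 2 ^ K) (fun i ↦ p i ∧ i ∉ (range K).image (2 ^ ·))) ≤
        #(restrictedDistincts (N + 1) (fun i ↦ p i ∧ i ∉ (range K).image (2 ^ ·)))) :
    #(restrictedDistincts N p) ≤ #(restrictedDistincts (N + 1) p) := by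
  have hdiff := card_restrictedDistincts_succ_sub p K N hp
  split_ifs at hdiff with hPN
  · have := hle hPN
    omega
  · omega

theorem restrictedDistincts_two_pow_nonempty {m K : ℕ} (hP : 8 ≤ 2 ^ K)
    (hPA : 2 ^ K = m ∨ 2 ^ K = m + 1) :
    (restrictedDistincts (2 ^ K)
      (fun i ↦ i ∉ ({m, m + 1} : Finset ℕ) ∧ i ∉ (range K).image (2 ^ ·))).Nonempty := by
  refine ⟨⟨{3, 2 ^ K - 3}, ?_, ?_⟩, ?_⟩
  · simp only [Multiset.insert_eq_cons, Multiset.mem_cons, Multiset.mem_singleton]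
    omega
  · simp only [Multiset.insert_eq_cons, Multiset.sum_cons, Multiset.sum_singleton]
    omega
  · simp only [restrictedDistincts, restricted, distincts, mem_inter, mem_filter, mem_univ,
      true_and, Multiset.insert_eq_cons, Multiset.mem_cons, Multiset.mem_singleton,
      forall_eq_or_imp, forall_eq, mem_insert, mem_singleton, mem_image, mem_range,
      not_exists, not_and, Multiset.nodup_cons, Multiset.nodup_singleton]
    refine ⟨⟨⟨by omega, fun j _ h ↦ ?_⟩, by omega, fun j hj h ↦ ?_⟩, by omega, trivial⟩
    · rcases j with _ | j
      · simp at h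
      · rw [pow_succ] at h
        omega
    · have := Nat.pow_le_pow_right two_pos hj
      rw [pow_succ] at this
      omega

theorem card_restrictedDistincts_notMem_pair_le_succ {m N : ℕ} (hNm : 8 ≤ N + m) :
    #(restrictedDistincts N (· ∉ ({m, m + 1} : Finset ℕ))) ≤
      #(restrictedDistincts (N + 1) (· ∉ ({m, m + 1} : Finset ℕ))) := by
  set A : Finset ℕ := {m, m + 1}
  obtain ⟨K, hK, hKmin⟩ : ∃ K, (2 ^ K ∈ A ∨ N + 1 < 2 ^ K) ∧ ∀ j < K, 2 ^ j ∉ A :=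
    have hex : ∃ K, 2 ^ K ∈ A ∨ N + 1 < 2 ^ K := ⟨N + 1, Or.inr Nat.lt_two_pow_self⟩
    ⟨Nat.find hex, Nat.find_spec hex, fun j hj h ↦ Nat.find_min hex hj (Or.inl h)⟩
  refine card_restrictedDistincts_le_succ _ K N hKmin fun hPN ↦ ?_
  have hPA : 2 ^ K = m ∨ 2 ^ K = m + 1 := by simpa [A] using hK.resolve_right (by omega)
  rcases (N + 1 - 2 ^ K).eq_zero_or_pos with h0 | hpos
  · have hP : 8 ≤ 2 ^ K := by
      have : 3 ≤ K := by
        by_contra!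
        interval_cases K <;> omega
      exact (Nat.pow_le_pow_right two_pos this).trans' (by norm_num)
    rw [h0, show N + 1 = 2 ^ K by omega]
    exact (card_le_one_of_subsingleton _).trans
      (Finset.card_pos.2 (restrictedDistincts_two_pow_nonempty hP hPA))
  · have hclosed : ∀ a, 0 < a → a ∉ A ∧ a ∉ (range K).image (2 ^ ·) →
        a + 2 ^ K ∉ A ∧ a + 2 ^ K ∉ (range K).image (2 ^ ·) := by
      rintro a ha ⟨haA, hapow⟩
      simp only [A, mem_insert, mem_singleton, mem_image, mem_range, not_exists, not_and]
        at haA hapow ⊢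
      refine ⟨fun h ↦ ?_, fun j hj h ↦ ?_⟩
      · rcases K.eq_zero_or_pos with rfl | hK0
        · omega
        · exact hapow 0 hK0 (by omega)
      · have := Nat.pow_lt_pow_right one_lt_two hj
        omega
    have := card_restrictedDistincts_le_add (2 ^ K) hpos.ne' hclosed
    rwa [Nat.sub_add_cancel hPN] at this

def distinctsWithPart (n m : ℕ) : Finset n.Partition :=
  (distincts n).filter (m ∈ ·.parts)

theorem card_filter_notMem_distinctsWithPart {n a b : ℕ} (ha : 1 ≤ a) (han : a ≤ n)
    (hab : a ≠ b) :
    #((distinctsWithPart n a).filter (b ∉ ·.parts)) =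
      #(restrictedDistincts (n - a) (· ∉ ({a, b} : Finset ℕ))) := by
  let e := partitionWithPartEquiv ha han
  refine card_bij' (fun q hq ↦ e ⟨q, (mem_filter.1 (mem_filter.1 hq).1).2⟩)
    (fun q _ ↦ (e.symm q).1) (fun q hq ↦ ?_) (fun q hq ↦ ?_) (fun q _ ↦ by simp) (fun q _ ↦ by simp)
  · simp only [distinctsWithPart, distincts, mem_filter, mem_univ, true_and] at hq
    obtain ⟨⟨hnd, -⟩, hb⟩ := hq
    simp only [restrictedDistincts, restricted, distincts, mem_inter, mem_filter, mem_univ,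
      true_and, e, partitionWithPartEquiv_apply_parts, hnd.mem_erase_iff, mem_insert,
      mem_singleton]
    exact ⟨fun i hi ↦ by rintro (rfl | rfl) <;> tauto, hnd.erase a⟩
  · simp only [restrictedDistincts, restricted, distincts, mem_inter, mem_filter, mem_univ,
      true_and, mem_insert, mem_singleton, not_or] at hq
    obtain ⟨hS, hnd⟩ := hq
    simp only [distinctsWithPart, distincts, mem_filter, mem_univ, true_and, e,
      partitionWithPartEquiv_symm_apply_parts, Multiset.nodup_cons, Multiset.mem_cons]
    exact ⟨⟨⟨fun h ↦ (hS a h).1 rfl, hnd⟩, Or.inl trivial⟩,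
      by rintro (rfl | h); exacts [hab rfl, (hS b h).2 rfl]⟩

theorem card_distinctsWithPart_succ_le {n m : ℕ} (hn : 9 ≤ n) (hm : 1 ≤ m) :
    #(distinctsWithPart n (m + 1)) ≤ #(distinctsWithPart n m) := by
  rw [← card_filter_add_card_filter_not (s := distinctsWithPart n (m + 1)) (m ∈ ·.parts),
    ← card_filter_add_card_filter_not (s := distinctsWithPart n m) (m + 1 ∈ ·.parts)]
  have hboth : (distinctsWithPart n (m + 1)).filter (m ∈ ·.parts) =
      (distinctsWithPart n m).filter (m + 1 ∈ ·.parts) := by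
    ext q
    simp only [distinctsWithPart, mem_filter]
    tauto
  rw [hboth, add_le_add_iff_left]
  rcases le_or_gt (m + 1) n with hmn | hmn
  · rw [card_filter_notMem_distinctsWithPart (by omega) hmn (by omega),
      card_filter_notMem_distinctsWithPart hm (by omega) (by omega), pair_comm]
    have := card_restrictedDistincts_notMem_pair_le_succ (m := m) (N := n - (m + 1)) (by omega)
    rwa [show n - (m + 1) + 1 = n - m by omega] at this
  · refine (Finset.card_eq_zero.2 (filter_eq_empty_iff.2 fun q hq ↦ ?_)).trans_le (zero_le _)
    exact absurd (le_of_mem_parts (mem_filter.1 hq).2) (by omega)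

theorem antitoneOn_card_distinctsWithPart {n : ℕ} (hn : 9 ≤ n) :
    AntitoneOn (fun m ↦ #(distinctsWithPart n m)) (Set.Ici 1) :=
  antitoneOn_nat_Ici_of_succ_le fun _ hm ↦ card_distinctsWithPart_succ_le hn hm

theorem card_filter_parts_mod_eq {n r t : ℕ} (hr : 0 < r) (hrt : r ≤ t) (q : n.Partition)
    (hq : q.parts.Nodup) :
    Multiset.card (q.parts.filter (· % t = r % t)) =
      #((range (n + 1)).filter (fun c ↦ c * t + r ∈ q.parts)) := by
  rw [← Multiset.toFinset_card_of_nodup (hq.filter _),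
    ← Finset.card_image_of_injective ((range (n + 1)).filter (fun c ↦ c * t + r ∈ q.parts))
      fun c c' h ↦ Nat.eq_of_mul_eq_mul_right (by omega : 0 < t) (Nat.add_right_cancel (m := r) h)]
  congr 1
  ext x
  simp only [Multiset.mem_toFinset, Multiset.mem_filter, mem_image, mem_filter, mem_range]
  constructor
  · rintro ⟨hx, hmod⟩
    have hrx : r ≤ x := by
      by_contra! hxr
      have hxt : x % t = x := Nat.mod_eq_of_lt (by omega)
      rcases hrt.lt_or_eq with hlt | rfl
      · rw [hxt, Nat.mod_eq_of_lt hlt] at hmod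
        omega
      · rw [hxt, Nat.mod_self] at hmod
        exact (q.parts_pos hx).ne' hmod
    have hc : (x - r) / t * t = x - r :=
      Nat.div_mul_cancel (Nat.dvd_of_mod_eq_zero (Nat.sub_mod_eq_zero_of_mod_eq hmod))
    refine ⟨(x - r) / t, ⟨?_, by rwa [hc, Nat.sub_add_cancel hrx]⟩, by omega⟩
    have := Nat.div_le_self (x - r) t
    have := le_of_mem_parts hx
    omega
  · rintro ⟨c, ⟨-, hc⟩, rfl⟩
    exact ⟨hc, Nat.mul_add_mod_self_right ..⟩

end Nat.Partition

open Nat.Partition in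
theorem Dk_two_eq_sum_card_distinctsWithPart {r t : ℕ} (hr : 0 < r) (hrt : r ≤ t) (n : ℕ) :
    Dk 2 r t n = ∑ c ∈ range (n + 1), #(distinctsWithPart n (c * t + r)) := by
  change ∑ q ∈ countRestricted n 2, _ = _
  simp_rw [countRestricted_two, distinctsWithPart, card_filter]
  rw [sum_comm]
  refine sum_congr rfl fun q hq ↦ ?_
  rw [← card_filter, card_filter_parts_mod_eq hr hrt q (mem_filter.1 hq).2]

theorem stmt4_general (t r s : ℕ)
    (hr1 : 1 ≤ r) (hrs : r < s) (hst : s ≤ t) :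
    ∀ n : ℕ, 9 ≤ n → Dk 2 s t n ≤ Dk 2 r t n := by
  intro n hn
  rw [Dk_two_eq_sum_card_distinctsWithPart (by omega) hst,
    Dk_two_eq_sum_card_distinctsWithPart hr1 (by omega)]
  exact sum_le_sum fun c _ ↦ Nat.Partition.antitoneOn_card_distinctsWithPart hn
    (Set.mem_Ici.2 (by omega)) (Set.mem_Ici.2 (by omega)) (by omega)

theorem stmt4 (t r s : ℕ) (ht1 : 2 ≤ t) (ht2 : t ≤ 10)
    (hr1 : 1 ≤ r) (hrs : r < s) (hst : s ≤ t) :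
    ∀ n : ℕ, 9 ≤ n → Dk 2 s t n ≤ Dk 2 r t n :=
  stmt4_general t r s hr1 hrs hst
end

section
/- Let k, t ≥ 2 and 1 ≤ r ≤ t be integers. For every complex number q with |q| < 1, the identity Σ_{n=0}^∞ D_k(r,t;n)·q^n = ξ_k(q) · Σ_{m ≥ 1, m ≡ r (mod t)} ( q^m/(1 − q^m) − k·q^{km}/(1 − q^{km}) ) holds, with all series converging absolutely. -/
/-!
Encode a `k`-regular partition by its multiset of parts. The sum of `q ^ |λ|` over the
`k`-regular partitions with parts in a set `S` factorizes over `S`: splitting off the parts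
equal to `m` contributes the factor `∑_{j<k} q^{mj}`, so `ξ_k(q) = ∑_λ q^{|λ|}`. Weighting
each partition by the multiplicity of `m` turns that factor into `∑_{j<k} j q^{mj}`, which
is `x/(1-x) - k x^k/(1-x^k)` times `∑_{j<k} x^j` at `x = q^m`. Since the number of parts
`≡ r (mod t)` is the sum of these multiplicities over `m ≡ r`, exchanging the two sums gives
the identity. Everything converges absolutely because `∑_λ |q|^{|λ|} ≤ exp (k/(1-|q|))` and
a partition has at most `|λ|` parts.
-/

open Real

/-- The generating function of `k`-regular partitions,
`ξ_k(q) = ∏_{n ≥ 1} (1 - q^{kn})/(1 - q^n)`. -/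
noncomputable def xi (k : ℕ) (q : ℂ) : ℂ :=
  ∏' n : ℕ, (1 - q ^ (k * (n + 1))) / (1 - q ^ (n + 1))

open Finset Filter

lemma hasSum_fintype_prod_mul {ι X R : Type*} [Fintype ι] [Semiring R]
    [TopologicalSpace R] [IsTopologicalSemiring R] (a : ι → R) {b : X → R} {B : R}
    (hb : HasSum b B) :
    HasSum (fun p : ι × X => a p.1 * b p.2) ((∑ i, a i) * B) := by
  classical
  have hslice : ∀ i ∈ (univ : Finset ι),
      HasSum (fun p : ι × X => if p.1 = i then a i * b p.2 else 0) (a i * B) := by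
    intro i _
    refine ((Prod.mk_right_injective i).hasSum_iff ?_).1
      (by simpa [Function.comp_def] using hb.mul_left (a i))
    rintro ⟨j, x⟩ hjx
    rw [if_neg]
    rintro rfl
    exact hjx ⟨x, rfl⟩
  simpa [Finset.sum_mul] using hasSum_sum hslice

lemma Multiset.hasSum_count {α R : Type*} [DecidableEq α] [AddCommMonoidWithOne R]
    [TopologicalSpace R] (s : Multiset α) : HasSum (fun a => (s.count a : R)) s.card := by
  have h : HasSum (fun a => (s.count a : R)) (∑ a ∈ s.toFinset, (s.count a : R)) :=
    hasSum_sum_of_ne_finset_zero fun a ha => by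
      rw [Multiset.count_eq_zero.2 (by simpa using ha), Nat.cast_zero]
  rwa [← Nat.cast_sum, Multiset.toFinset_sum_count_eq] at h

lemma card_filter_le_sum {s : Multiset ℕ} (hs : ∀ i ∈ s, 0 < i) (p : ℕ → Prop)
    [DecidablePred p] : (s.filter p).card ≤ s.sum :=
  (Multiset.card_le_card (Multiset.filter_le p s)).trans
    (by simpa using Multiset.card_nsmul_le_sum hs)

lemma one_sub_pow_div_one_sub {K : Type*} [Field K] {x : K} (hx : x ≠ 1) (k : ℕ) :
    (1 - x ^ k) / (1 - x) = ∑ j ∈ range k, x ^ j := by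
  rw [geom_sum_eq hx, ← neg_div_neg_eq, neg_sub, neg_sub]

lemma sum_range_mul_pow_mul_one_sub_sq {R : Type*} [CommRing R] (x : R) (k : ℕ) :
    (∑ j ∈ range k, (j : R) * x ^ j) * (1 - x) ^ 2 = x * (1 - x ^ k) - k * x ^ k * (1 - x) := by
  induction k with
  | zero => simp
  | succ n ih =>
    rw [sum_range_succ, add_mul, ih]
    push_cast
    ring

-- `x / (1 - x) - k x ^ k / (1 - x ^ k)` is `x (d/dx) log ((1 - x ^ k) / (1 - x))`.
lemma sum_range_mul_pow_eq {K : Type*} [Field K] {x : K} (k : ℕ) (hx : x ≠ 1)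
    (hxk : x ^ k ≠ 1) :
    ∑ j ∈ range k, (j : K) * x ^ j =
      (x / (1 - x) - k * x ^ k / (1 - x ^ k)) * ∑ j ∈ range k, x ^ j := by
  have h1 : 1 - x ≠ 0 := sub_ne_zero.2 hx.symm
  have h2 : 1 - x ^ k ≠ 0 := sub_ne_zero.2 hxk.symm
  rw [← one_sub_pow_div_one_sub hx k]
  field_simp
  linear_combination sum_range_mul_pow_mul_one_sub_sq x k

section RealBounds

variable {k : ℕ} {x : ℝ}

lemma exists_nat_mul_pow_le (hx0 : 0 ≤ x) (hx1 : x < 1) :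
    ∃ y, 0 ≤ y ∧ y < 1 ∧ ∃ C, ∀ n : ℕ, n * x ^ n ≤ C * y ^ n := by
  obtain ⟨y, hxy, hy1⟩ := exists_between hx1
  have hy : 0 < y := hx0.trans_lt hxy
  have hr0 : 0 ≤ x / y := by positivity
  have hsum : Summable (fun n : ℕ => (n : ℝ) * (x / y) ^ n) := by
    simpa using summable_pow_mul_geometric_of_norm_lt_one 1
      (by rwa [Real.norm_of_nonneg hr0, div_lt_one hy])
  refine ⟨y, hy.le, hy1, ∑' n : ℕ, (n : ℝ) * (x / y) ^ n, fun n => ?_⟩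
  calc (n : ℝ) * x ^ n = n * (x / y) ^ n * y ^ n := by
        rw [mul_assoc, ← mul_pow, div_mul_cancel₀ _ hy.ne']
    _ ≤ _ := mul_le_mul_of_nonneg_right (hsum.le_tsum n fun _ _ => by positivity) (by positivity)

lemma geom_sum_pow_mul_le_exp (hx0 : 0 ≤ x) (hx1 : x ≤ 1) (i : ℕ) :
    ∑ j ∈ range k, x ^ (i * j) ≤ Real.exp (k * x ^ i) := by
  rcases k with _ | k
  · simp
  have htail : ∑ j ∈ range k, x ^ (i * (j + 1)) ≤ k * x ^ i := by
    simpa using sum_le_card_nsmul (range k) _ (x ^ i)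
      fun j _ => pow_le_pow_of_le_one hx0 hx1 (Nat.le_mul_of_pos_right i j.succ_pos)
  rw [sum_range_succ', mul_zero, pow_zero]
  push_cast
  nlinarith [Real.add_one_le_exp ((k + 1) * x ^ i), pow_nonneg hx0 i]

lemma prod_geom_sum_pow_mul_le_exp (hx0 : 0 ≤ x) (hx1 : x < 1) (F : Finset ℕ) :
    ∏ i ∈ F, ∑ j ∈ range k, x ^ (i * j) ≤ Real.exp (k / (1 - x)) := by
  have hgeom : ∑ i ∈ F, x ^ i ≤ (1 - x)⁻¹ := by
    rw [← tsum_geometric_of_lt_one hx0 hx1]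
    exact (summable_geometric_of_lt_one hx0 hx1).sum_le_tsum F fun i _ => by positivity
  calc ∏ i ∈ F, ∑ j ∈ range k, x ^ (i * j)
      ≤ ∏ i ∈ F, Real.exp (k * x ^ i) :=
        prod_le_prod (fun i _ => by positivity) fun i _ => geom_sum_pow_mul_le_exp hx0 hx1.le i
    _ = Real.exp (k * ∑ i ∈ F, x ^ i) := by rw [← Real.exp_sum, mul_sum]
    _ ≤ Real.exp (k / (1 - x)) := by
        rw [div_eq_mul_inv]
        gcongr

end RealBounds

section NormBounds

variable {k : ℕ} {q : ℂ}

lemma pow_ne_one_of_norm_lt_one (hq : ‖q‖ < 1) {n : ℕ} (hn : n ≠ 0) : q ^ n ≠ 1 := by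
  intro h
  simpa [← norm_pow, h] using pow_lt_one₀ (norm_nonneg q) hq hn

lemma norm_pow_div_one_sub_pow_le (hq : ‖q‖ < 1) (n : ℕ) :
    ‖q ^ n / (1 - q ^ n)‖ ≤ ‖q‖ ^ n / (1 - ‖q‖) := by
  have hq' : 0 < 1 - ‖q‖ := by linarith
  rcases n.eq_zero_or_pos with rfl | hn
  · -- the left side is `1 / 0 = 0`
    simp only [pow_zero, sub_self, div_zero, norm_zero]
    positivity
  have hden : 1 - ‖q‖ ≤ ‖1 - q ^ n‖ := by
    have hpow : ‖q‖ ^ n ≤ ‖q‖ := pow_le_of_le_one (norm_nonneg q) hq.le hn.ne'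
    have := norm_sub_norm_le (1 : ℂ) (q ^ n)
    rw [norm_one, norm_pow] at this
    linarith
  rw [norm_div, norm_pow]
  exact div_le_div_of_nonneg_left (by positivity) hq' hden

lemma summable_norm_pow_div_one_sub_pow (hq : ‖q‖ < 1) :
    Summable (fun n : ℕ => ‖q ^ n / (1 - q ^ n)‖) :=
  ((summable_geometric_of_lt_one (norm_nonneg q) hq).div_const _).of_nonneg_of_le
    (fun _ => norm_nonneg _) (norm_pow_div_one_sub_pow_le hq)

lemma summable_norm_lambert (hk : 0 < k) (hq : ‖q‖ < 1) (P : ℕ → Prop) :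
    Summable (fun m : {m : ℕ // P m} =>
      ‖q ^ (m : ℕ) / (1 - q ^ (m : ℕ)) -
        (k : ℂ) * q ^ (k * (m : ℕ)) / (1 - q ^ (k * (m : ℕ)))‖) := by
  have h1 := (summable_norm_pow_div_one_sub_pow hq).comp_injective
    (Subtype.val_injective (p := P))
  have h2 := (summable_norm_pow_div_one_sub_pow hq).comp_injective
    ((mul_right_injective₀ hk.ne').comp (Subtype.val_injective (p := P)))
  refine (h1.add (h2.mul_left (k : ℝ))).of_nonneg_of_le (fun _ => norm_nonneg _) fun m => ?_
  refine (norm_sub_le _ _).trans_eq ?_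
  simp [mul_div_assoc]

end NormBounds

/-- The multisets of parts of the `k`-regular partitions, of any size, with all parts in `S`. -/
def regularMultisets (k : ℕ) (S : Set ℕ) : Set (Multiset ℕ) :=
  {s | (∀ i ∈ s, i ∈ S) ∧ ∀ i, s.count i < k}

section Splitting

variable {k m : ℕ} {S : Set ℕ}

lemma regularMultisets_mono {T : Set ℕ} (h : S ⊆ T) :
    regularMultisets k S ⊆ regularMultisets k T :=
  fun _ hs => ⟨fun i hi => h (hs.1 i hi), hs.2⟩

lemma count_replicate_add_of_notMem {s : Multiset ℕ} (hms : m ∉ s) (j : ℕ) :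
    (Multiset.replicate j m + s).count m = j := by
  simp [Multiset.count_eq_zero.2 hms]

lemma filter_ne_replicate_add_of_notMem {s : Multiset ℕ} (hms : m ∉ s) (j : ℕ) :
    (Multiset.replicate j m + s).filter (· ≠ m) = s := by
  rw [Multiset.filter_add, Multiset.filter_eq_nil.2 (fun i hi => by
      simp [Multiset.eq_of_mem_replicate hi]),
    zero_add, Multiset.filter_eq_self]
  rintro i hi rfl
  exact hms hi

def regularMultisetsInsertEquiv (hm : m ∉ S) :
    Fin k × regularMultisets k S ≃ regularMultisets k (insert m S) where
  toFun p := ⟨Multiset.replicate p.1 m + p.2, by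
    obtain ⟨j, s, hsS, hsk⟩ := p
    have hms : m ∉ s := fun h => hm (hsS m h)
    refine ⟨fun i hi => ?_, fun i => ?_⟩
    · rcases Multiset.mem_add.1 hi with h | h
      · exact Or.inl (Multiset.eq_of_mem_replicate h)
      · exact Or.inr (hsS i h)
    · rcases eq_or_ne i m with rfl | h
      · simpa only [count_replicate_add_of_notMem hms] using j.2
      · simpa [Multiset.count_replicate, h.symm] using hsk i⟩
  invFun s := (⟨s.1.count m, s.2.2 m⟩, ⟨s.1.filter (· ≠ m),
    fun i hi => by
      obtain ⟨hi, him⟩ := Multiset.mem_filter.1 hi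
      exact (s.2.1 i hi).resolve_left him,
    fun i => (Multiset.count_le_of_le i (Multiset.filter_le _ _)).trans_lt (s.2.2 i)⟩)
  left_inv := by
    rintro ⟨j, s, hsS, hsk⟩
    have hms : m ∉ s := fun h => hm (hsS m h)
    refine Prod.ext (Fin.ext ?_) (Subtype.ext ?_)
    · exact count_replicate_add_of_notMem hms j
    · exact filter_ne_replicate_add_of_notMem hms j
  right_inv := by
    rintro ⟨s, hs⟩
    ext1
    dsimp only
    rw [← Multiset.filter_eq', Multiset.filter_add_not]

lemma hasSum_regularMultisets_insert {R : Type*} [CommSemiring R] [TopologicalSpace R]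
    [IsTopologicalSemiring R] (hm : m ∉ S) (c : ℕ → R) {q T : R}
    (hT : HasSum (fun s : regularMultisets k S => q ^ s.1.sum) T) :
    HasSum (fun s : regularMultisets k (insert m S) => c (s.1.count m) * q ^ s.1.sum)
      ((∑ j ∈ range k, c j * q ^ (m * j)) * T) := by
  have hsplit : (fun s : regularMultisets k (insert m S) => c (s.1.count m) * q ^ s.1.sum) ∘
      regularMultisetsInsertEquiv hm = fun p => c p.1 * q ^ (m * p.1) * q ^ p.2.1.sum := by
    funext ⟨j, s, hsS, _⟩
    have hms : m ∉ s := fun h => hm (hsS m h)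
    simp [regularMultisetsInsertEquiv, count_replicate_add_of_notMem hms, pow_add, mul_assoc,
      mul_comm m]
  rw [← (regularMultisetsInsertEquiv hm).hasSum_iff, hsplit, ← Fin.sum_univ_eq_sum_range]
  exact hasSum_fintype_prod_mul (fun j : Fin k => c j * q ^ (m * j)) hT

end Splitting

lemma hasSum_regularMultisets_finset {R : Type*} [CommSemiring R] [TopologicalSpace R]
    [IsTopologicalSemiring R] {k : ℕ} (hk : 0 < k) (q : R) (F : Finset ℕ) :
    HasSum (fun s : regularMultisets k F => q ^ s.1.sum)
      (∏ i ∈ F, ∑ j ∈ range k, q ^ (i * j)) := by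
  induction F using Finset.induction_on with
  | empty =>
    have hzero : (0 : Multiset ℕ) ∈ regularMultisets k (∅ : Finset ℕ) := ⟨by simp, by simpa⟩
    convert hasSum_single (⟨0, hzero⟩ : regularMultisets k (∅ : Finset ℕ)) _ using 1
    · simp
    · intro s hne
      refine absurd (Subtype.ext ?_) hne
      exact Multiset.eq_zero_of_forall_notMem fun i hi => by simpa using s.2.1 i hi
  | insert m F hm ih =>
    rw [prod_insert hm, coe_insert]
    simpa using hasSum_regularMultisets_insert (mod_cast hm) (fun _ => (1 : R)) ih

section Summability

variable {k : ℕ} {S : Set ℕ} {x : ℝ}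

lemma summable_pow_sum_regularMultisets (hk : 0 < k) (hS : S ⊆ Set.Ioi 0) (hx0 : 0 ≤ x)
    (hx1 : x < 1) : Summable (fun s : regularMultisets k S => x ^ s.1.sum) := by
  refine (summable_subtype_iff_indicator (f := fun s : Multiset ℕ => x ^ s.sum)).2 <|
    summable_of_sum_le (c := Real.exp (k / (1 - x)))
    (fun _ => Set.indicator_nonneg (fun _ _ => by positivity) _) fun u => ?_
  set F := Finset.Icc 1 (u.sup Multiset.sum)
  have hle : ∀ s ∈ u, (regularMultisets k S).indicator (fun s => x ^ s.sum) s ≤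
      (regularMultisets k F).indicator (fun s => x ^ s.sum) s := by
    intro s hsu
    by_cases hs : s ∈ regularMultisets k S
    · have hsF : s ∈ regularMultisets k F := ⟨fun i hi => Finset.mem_Icc.2
        ⟨hS (hs.1 i hi), (Multiset.le_sum_of_mem hi).trans (le_sup hsu)⟩, hs.2⟩
      rw [Set.indicator_of_mem hs, Set.indicator_of_mem hsF]
    · rw [Set.indicator_of_notMem hs]
      exact Set.indicator_nonneg (fun _ _ => by positivity) _
  calc ∑ s ∈ u, (regularMultisets k S).indicator (fun s => x ^ s.sum) s
      ≤ ∑ s ∈ u, (regularMultisets k F).indicator (fun s => x ^ s.sum) s := sum_le_sum hle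
    _ ≤ ∏ i ∈ F, ∑ j ∈ range k, x ^ (i * j) :=
        sum_le_hasSum u (fun _ _ => Set.indicator_nonneg (fun _ _ => by positivity) _)
          (hasSum_subtype_iff_indicator.1 (hasSum_regularMultisets_finset hk x F))
    _ ≤ Real.exp (k / (1 - x)) := prod_geom_sum_pow_mul_le_exp hx0 hx1 F

lemma summable_sum_mul_pow_sum_regularMultisets (hk : 0 < k) (hS : S ⊆ Set.Ioi 0)
    (hx0 : 0 ≤ x) (hx1 : x < 1) :
    Summable (fun s : regularMultisets k S => (s.1.sum : ℝ) * x ^ s.1.sum) := by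
  obtain ⟨y, hy0, hy1, C, hC⟩ := exists_nat_mul_pow_le hx0 hx1
  exact ((summable_pow_sum_regularMultisets hk hS hy0 hy1).mul_left C).of_nonneg_of_le
    (fun _ => by positivity) fun s => hC _

lemma summable_pow_sum_regularMultisets_of_norm_lt_one (hk : 0 < k) (hS : S ⊆ Set.Ioi 0)
    {q : ℂ} (hq : ‖q‖ < 1) : Summable (fun s : regularMultisets k S => q ^ s.1.sum) :=
  .of_norm <| by simpa [norm_pow] using summable_pow_sum_regularMultisets hk hS (norm_nonneg q) hq

end Summability

section Xi

variable {k : ℕ} {q : ℂ}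

lemma hasProd_geom_sum_regularMultisets (hk : 0 < k) (hq : ‖q‖ < 1) :
    HasProd (fun n : ℕ => ∑ j ∈ range k, q ^ ((n + 1) * j))
      (∑' s : regularMultisets k (Set.Ioi 0), q ^ s.1.sum) := by
  have hpos : ∀ F : Finset ℕ, (F.map (addRightEmbedding 1) : Set ℕ) ⊆ Set.Ioi 0 := by
    intro F i hi
    obtain ⟨n, -, rfl⟩ := Finset.mem_map.1 hi
    exact n.succ_pos
  have hpartial : ∀ F : Finset ℕ, ∏ n ∈ F, ∑ j ∈ range k, q ^ ((n + 1) * j) =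
      ∑' s, (regularMultisets k (F.map (addRightEmbedding 1))).indicator (q ^ ·.sum) s := by
    intro F
    have h := hasSum_regularMultisets_finset hk q (F.map (addRightEmbedding 1))
    simp only [prod_map, addRightEmbedding_apply] at h
    exact ((hasSum_subtype_iff_indicator (f := fun s : Multiset ℕ => q ^ s.sum)).1 h).tsum_eq.symm
  have hbound := (summable_subtype_iff_indicator (f := fun s : Multiset ℕ => ‖q‖ ^ s.sum)).1
    (summable_pow_sum_regularMultisets hk subset_rfl (norm_nonneg q) hq)
  rw [HasProd, tsum_subtype (regularMultisets k (Set.Ioi 0)) (q ^ ·.sum)]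
  refine (tendsto_tsum_of_dominated_convergence hbound (fun s => ?_)
    (.of_forall fun F s => ?_)).congr fun F => (hpartial F).symm
  · by_cases hs : s ∈ regularMultisets k (Set.Ioi 0)
    · refine tendsto_const_nhds.congr' ?_
      filter_upwards [eventually_ge_atTop (s.toFinset.image (· - 1))] with F hF
      have hsF : s ∈ regularMultisets k (F.map (addRightEmbedding 1)) := by
        refine ⟨fun i hi => Finset.mem_map.2 ⟨i - 1, hF (mem_image_of_mem _ ?_), ?_⟩, hs.2⟩
        · exact Multiset.mem_toFinset.2 hi
        · have hi0 : 0 < i := hs.1 i hi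
          simp only [addRightEmbedding_apply]
          omega
      rw [Set.indicator_of_mem hs, Set.indicator_of_mem hsF]
    · rw [Set.indicator_of_notMem hs]
      refine tendsto_const_nhds.congr fun F => (Set.indicator_of_notMem ?_ _).symm
      exact fun h => hs (regularMultisets_mono (hpos F) h)
  · rw [norm_indicator_eq_indicator_norm]
    refine (Set.indicator_le_indicator_of_subset (regularMultisets_mono (hpos F))
      (fun _ => norm_nonneg _) s).trans_eq ?_
    simp [norm_pow]

lemma xi_eq_tsum_regularMultisets (hk : 0 < k) (hq : ‖q‖ < 1) :
    xi k q = ∑' s : regularMultisets k (Set.Ioi 0), q ^ s.1.sum := by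
  rw [xi, ← (hasProd_geom_sum_regularMultisets hk hq).tprod_eq]
  congr 1
  funext n
  simp_rw [pow_mul' q k, pow_mul q (n + 1)]
  exact one_sub_pow_div_one_sub (pow_ne_one_of_norm_lt_one hq n.succ_ne_zero) k

end Xi

lemma hasSum_count_mul_pow_sum {k : ℕ} (hk : 0 < k) {q : ℂ} (hq : ‖q‖ < 1) {m : ℕ}
    (hm : 0 < m) :
    HasSum (fun s : regularMultisets k (Set.Ioi 0) => (s.1.count m : ℂ) * q ^ s.1.sum)
      ((q ^ m / (1 - q ^ m) - k * q ^ (k * m) / (1 - q ^ (k * m))) * xi k q) := by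
  have hm' : m ∉ Set.Ioi 0 \ {m} := fun h => h.2 rfl
  have hrest := (summable_pow_sum_regularMultisets_of_norm_lt_one hk
    (Set.sdiff_subset (t := {m})) hq).hasSum
  -- Both sums factor through the partitions having no part `m`.
  have hcount := hasSum_regularMultisets_insert hm' (fun j => (j : ℂ)) hrest
  have hall := hasSum_regularMultisets_insert hm' (fun _ => (1 : ℂ)) hrest
  rw [Set.insert_sdiff_singleton, Set.insert_eq_of_mem (s := Set.Ioi 0) hm] at hcount hall
  simp only [one_mul] at hall
  have hfactor : (q ^ m / (1 - q ^ m) - k * q ^ (k * m) / (1 - q ^ (k * m))) *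
      ∑ j ∈ range k, q ^ (m * j) = ∑ j ∈ range k, (j : ℂ) * q ^ (m * j) := by
    simp_rw [pow_mul q m, pow_mul' q k m]
    have hqm : ‖q ^ m‖ < 1 := by simpa using pow_lt_one₀ (norm_nonneg q) hq hm.ne'
    exact (sum_range_mul_pow_eq k (pow_ne_one_of_norm_lt_one hq hm.ne')
      (pow_ne_one_of_norm_lt_one hqm hk.ne')).symm
  rwa [xi_eq_tsum_regularMultisets hk hq, hall.tsum_eq, ← mul_assoc, hfactor]

lemma hasSum_count_mod_eq {R : Type*} [AddCommMonoidWithOne R] [TopologicalSpace R] (t r : ℕ)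
    {s : Multiset ℕ} (hs : ∀ i ∈ s, 0 < i) :
    HasSum (fun m : {m : ℕ // 1 ≤ m ∧ m % t = r % t} => (s.count m.1 : R))
      (s.filter (· % t = r % t)).card := by
  have hfilter : s.filter (fun m => 1 ≤ m ∧ m % t = r % t) = s.filter (· % t = r % t) :=
    Multiset.filter_congr fun i hi => and_iff_right (hs i hi)
  rw [← hfilter]
  refine (hasSum_subtype_iff_indicator (s := {m | 1 ≤ m ∧ m % t = r % t})
    (f := fun m => (s.count m : R))).2 ?_
  convert (s.filter (fun m => 1 ≤ m ∧ m % t = r % t)).hasSum_count (R := R) using 1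
  funext m
  simp [Set.indicator_apply, Multiset.count_filter]

def regularMultisetsFiberEquiv {k : ℕ} (hk : 0 < k) (n : ℕ) :
    {s : regularMultisets k (Set.Ioi 0) // s.1.sum = n} ≃ Nat.Partition.countRestricted n k where
  toFun s := ⟨⟨s.1.1, fun hi => s.1.2.1 _ hi, s.2⟩,
    Finset.mem_filter.2 ⟨Finset.mem_univ _, fun i _ => s.1.2.2 i⟩⟩
  invFun p := ⟨⟨p.1.parts, fun _ hi => p.1.parts_pos hi, fun i => by
      by_cases hi : i ∈ p.1.parts
      · exact (Finset.mem_filter.1 p.2).2 i hi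
      · rwa [Multiset.count_eq_zero.2 hi]⟩, p.1.parts_sum⟩
  left_inv _ := rfl
  right_inv _ := rfl

lemma hasSum_Dk_mul_pow {R : Type*} [CommSemiring R] [TopologicalSpace R]
    [IsTopologicalSemiring R] [RegularSpace R] {k : ℕ} (hk : 0 < k) (r t : ℕ) (x : R) {a : R}
    (h : HasSum (fun s : regularMultisets k (Set.Ioi 0) =>
      ((s.1.filter (· % t = r % t)).card : R) * x ^ s.1.sum) a) :
    HasSum (fun n => (Dk k r t n : R) * x ^ n) a := by
  rw [← (Equiv.sigmaFiberEquiv fun s : regularMultisets k (Set.Ioi 0) => s.1.sum).hasSum_iff]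
    at h
  refine h.sigma fun n => ?_
  rw [← (regularMultisetsFiberEquiv hk n).symm.hasSum_iff]
  have hvalue : (Dk k r t n : R) * x ^ n = ∑ p : Nat.Partition.countRestricted n k,
      ((p.1.parts.filter (· % t = r % t)).card : R) * x ^ p.1.parts.sum := by
    rw [Dk, Nat.cast_sum, Finset.sum_mul, ← Finset.sum_coe_sort]
    exact Finset.sum_congr rfl fun p _ => by rw [p.1.parts_sum]
  rw [hvalue]
  exact hasSum_fintype _

lemma summable_card_filter_mul_pow_sum {k : ℕ} (hk : 0 < k) {x : ℝ} (hx0 : 0 ≤ x)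
    (hx1 : x < 1) (p : ℕ → Prop) [DecidablePred p] :
    Summable (fun s : regularMultisets k (Set.Ioi 0) =>
      ((s.1.filter p).card : ℝ) * x ^ s.1.sum) :=
  (summable_sum_mul_pow_sum_regularMultisets hk subset_rfl hx0 hx1).of_nonneg_of_le
    (fun _ => by positivity) fun s => mul_le_mul_of_nonneg_right
      (mod_cast card_filter_le_sum (fun i hi => s.2.1 i hi) p) (by positivity)

lemma hasSum_card_filter_mul_pow_sum {k : ℕ} (hk : 0 < k) {q : ℂ} (hq : ‖q‖ < 1)
    (t r : ℕ) :
    HasSum (fun s : regularMultisets k (Set.Ioi 0) =>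
        ((s.1.filter (· % t = r % t)).card : ℂ) * q ^ s.1.sum)
      (xi k q * ∑' m : {m : ℕ // 1 ≤ m ∧ m % t = r % t},
        (q ^ (m : ℕ) / (1 - q ^ (m : ℕ)) -
          (k : ℂ) * q ^ (k * (m : ℕ)) / (1 - q ^ (k * (m : ℕ))))) := by
  -- Sum the multiplicity of the part `m` over pairs `(s, m)`: along `m` it counts the parts
  -- `≡ r`, along `s` it is given by `hasSum_count_mul_pow_sum`.
  set F : regularMultisets k (Set.Ioi 0) × {m : ℕ // 1 ≤ m ∧ m % t = r % t} → ℂ :=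
    fun p => (p.1.1.count p.2.1 : ℂ) * q ^ p.1.1.sum
  have hpos : ∀ s : regularMultisets k (Set.Ioi 0), ∀ i ∈ s.1, 0 < i :=
    fun s i hi => s.2.1 i hi
  have hnorm : Summable fun p => ‖F p‖ := by
    simp only [F, norm_mul, norm_pow, Complex.norm_natCast]
    have hrow := fun s =>
      (hasSum_count_mod_eq (R := ℝ) t r (hpos s)).mul_right (‖q‖ ^ s.1.sum)
    refine (summable_prod_of_nonneg fun _ => by positivity).2 ⟨fun s => (hrow s).summable, ?_⟩
    simpa only [(hrow _).tsum_eq] using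
      summable_card_filter_mul_pow_sum hk (norm_nonneg q) hq (· % t = r % t)
  have hF := hnorm.of_norm.hasSum
  have hrows := hF.prod_fiberwise fun s =>
    (hasSum_count_mod_eq (R := ℂ) t r (hpos s)).mul_right (q ^ s.1.sum)
  have hcols : HasSum (fun m : {m : ℕ // 1 ≤ m ∧ m % t = r % t} =>
      (q ^ (m : ℕ) / (1 - q ^ (m : ℕ)) -
        (k : ℂ) * q ^ (k * (m : ℕ)) / (1 - q ^ (k * (m : ℕ)))) * xi k q) (∑' p, F p) := by
    have hF' : HasSum (F ∘ Equiv.prodComm _ _) (∑' p, F p) :=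
      (Equiv.prodComm _ _).hasSum_iff.2 hF
    exact hF'.prod_fiberwise fun m => hasSum_count_mul_pow_sum hk hq (m := m.1) m.2.1
  have hlambert := (summable_norm_lambert hk hq fun m => 1 ≤ m ∧ m % t = r % t).of_norm.hasSum
  rw [mul_comm, (hlambert.mul_right (xi k q)).unique hcols]
  exact hrows

theorem stmt6_general (k t r : ℕ) (hk : 2 ≤ k)
    (q : ℂ) (hq : ‖q‖ < 1) :
    Summable (fun n : ℕ => ‖(Dk k r t n : ℂ) * q ^ n‖) ∧
    Summable (fun m : {m : ℕ // 1 ≤ m ∧ m % t = r % t} =>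
      ‖q ^ (m : ℕ) / (1 - q ^ (m : ℕ)) -
        (k : ℂ) * q ^ (k * (m : ℕ)) / (1 - q ^ (k * (m : ℕ)))‖) ∧
    ∑' n : ℕ, (Dk k r t n : ℂ) * q ^ n =
      xi k q *
        ∑' m : {m : ℕ // 1 ≤ m ∧ m % t = r % t},
          (q ^ (m : ℕ) / (1 - q ^ (m : ℕ)) -
            (k : ℂ) * q ^ (k * (m : ℕ)) / (1 - q ^ (k * (m : ℕ)))) := by
  have hk0 : 0 < k := by omega
  have hnorm := hasSum_Dk_mul_pow hk0 r t ‖q‖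
    (summable_card_filter_mul_pow_sum hk0 (norm_nonneg q) hq _).hasSum
  refine ⟨?_, summable_norm_lambert hk0 hq _,
    (hasSum_Dk_mul_pow hk0 r t q (hasSum_card_filter_mul_pow_sum hk0 hq t r)).tsum_eq⟩
  simpa [norm_pow] using hnorm.summable

theorem stmt6 (k t r : ℕ) (hk : 2 ≤ k) (ht : 2 ≤ t) (hr1 : 1 ≤ r) (hrt : r ≤ t)
    (q : ℂ) (hq : ‖q‖ < 1) :
    Summable (fun n : ℕ => ‖(Dk k r t n : ℂ) * q ^ n‖) ∧
    Summable (fun m : {m : ℕ // 1 ≤ m ∧ m % t = r % t} =>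
      ‖q ^ (m : ℕ) / (1 - q ^ (m : ℕ)) -
        (k : ℂ) * q ^ (k * (m : ℕ)) / (1 - q ^ (k * (m : ℕ)))‖) ∧
    ∑' n : ℕ, (Dk k r t n : ℂ) * q ^ n =
      xi k q *
        ∑' m : {m : ℕ // 1 ≤ m ∧ m % t = r % t},
          (q ^ (m : ℕ) / (1 - q ^ (m : ℕ)) -
            (k : ℂ) * q ^ (k * (m : ℕ)) / (1 - q ^ (k * (m : ℕ)))) :=
  stmt6_general k t r hk q hq
end

section
/- Let k ≥ 2 and N ≥ 0 be integers. For every complex number z with Re z > 0 and |z| < 2π/k, one has (−1)^N · ( Σ_{n=1}^∞ n^N·e^{−nz} − k^{N+1} · Σ_{n=1}^∞ n^N·e^{−knz} ) = Σ_{m=0}^∞ (1 − k^{m+N+1})·B_{N+m+1} / ((N+m+1)·m!) · z^m, with the right-hand series converging absolutely. -/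
/-!
Differentiating termwise, `∑ n ^ N e^{-nz} = (-d/dz) ^ N (e^z - 1)⁻¹`, and the derivative of the
power series on the right is the same series with `N + 1` in place of `N`; so it suffices to treat
`N = 0`. There the Bernoulli generating function `w / (e^w - 1) = ∑ B_n w ^ n / n!`, valid for
`|w| < 2π` thanks to the bound `|B_n| ≤ 4 n! / (2π) ^ n` (from `ζ(2j) ≤ ζ(2) < 2`), is applied at
`w = z` and `w = kz`; the constant terms `B_0 = 1` cancel and division by `z` gives
`1 / (e^z - 1) - k / (e^{kz} - 1) = ∑ (1 - k ^ (m+1)) B_{m+1} / (m+1)! z ^ m` for `|kz| < 2π`.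
-/

open Real Complex
open scoped Nat

lemma PowerSeries.hasSum_coeff_mul_mul_pow {R : Type*} [NormedCommRing R] [CompleteSpace R]
    {P Q : PowerSeries R} {z : R} (hP : Summable fun n => ‖coeff n P * z ^ n‖)
    (hQ : Summable fun n => ‖coeff n Q * z ^ n‖) :
    HasSum (fun n => coeff n (P * Q) * z ^ n)
      ((∑' n, coeff n P * z ^ n) * ∑' n, coeff n Q * z ^ n) := by
  have hcauchy (n : ℕ) : ∑ kl ∈ Finset.HasAntidiagonal.antidiagonal n,
      coeff kl.1 P * z ^ kl.1 * (coeff kl.2 Q * z ^ kl.2) = coeff n (P * Q) * z ^ n := by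
    rw [coeff_mul, Finset.sum_mul]
    refine Finset.sum_congr rfl fun kl hkl => ?_
    rw [← Finset.HasAntidiagonal.mem_antidiagonal.1 hkl, pow_add]
    ring
  rw [tsum_mul_tsum_eq_tsum_sum_antidiagonal_of_summable_norm hP hQ, tsum_congr hcauchy]
  exact ((summable_norm_sum_mul_antidiagonal_of_summable_norm hP hQ).of_norm.congr hcauchy).hasSum

lemma hasDerivAt_tsum_mul_pow {𝕜 : Type*} [RCLike 𝕜] {a : ℕ → 𝕜} {r : ℝ} {z : 𝕜} (hz : ‖z‖ < r)
    (ha : Summable fun m : ℕ => ‖((m : 𝕜) + 1) * a (m + 1)‖ * r ^ m) :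
    HasDerivAt (fun w => ∑' m, a m * w ^ m)
      (∑' m : ℕ, ((m : 𝕜) + 1) * a (m + 1) * z ^ m) z := by
  set u : ℕ → ℝ := fun m => ‖a m‖ * m * r ^ (m - 1)
  have hu : Summable u := by
    refine (summable_nat_add_iff 1).1 (ha.congr fun m => ?_)
    rw [← Nat.cast_add_one, norm_mul, RCLike.norm_natCast]
    simp only [u, Nat.add_sub_cancel]
    ring
  have hbound (m : ℕ) (w : 𝕜) (hw : w ∈ Metric.ball (0 : 𝕜) r) :
      ‖a m * (m * w ^ (m - 1))‖ ≤ u m := by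
    rw [mem_ball_zero_iff] at hw
    simp only [u, norm_mul, norm_pow, RCLike.norm_natCast, ← mul_assoc]
    gcongr
  have hderiv := hasDerivAt_tsum_of_isPreconnected hu Metric.isOpen_ball
    (convex_ball (0 : 𝕜) r).isPreconnected (fun m w _ => (hasDerivAt_pow m w).const_mul (a m))
    hbound (Metric.mem_ball_self (hz.trans_le' (norm_nonneg z)))
    (summable_of_ne_finset_zero (s := {0}) fun m hm => by simp_all) (mem_ball_zero_iff.2 hz)
  have hsum : Summable fun m => a m * (m * z ^ (m - 1)) :=
    .of_norm_bounded hu fun m => hbound m z (mem_ball_zero_iff.2 hz)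
  rw [hsum.tsum_eq_zero_add, Nat.cast_zero, zero_mul, mul_zero, zero_add] at hderiv
  refine hderiv.congr_deriv (tsum_congr fun m => ?_)
  rw [Nat.add_sub_cancel, Nat.cast_add_one]
  ring

lemma tsum_one_div_nat_pow_two_mul_le_two {j : ℕ} (hj : j ≠ 0) :
    ∑' n : ℕ, 1 / (n : ℝ) ^ (2 * j) ≤ 2 := by
  have hle (n : ℕ) : 1 / (n : ℝ) ^ (2 * j) ≤ 1 / (n : ℝ) ^ 2 := by
    rcases n.eq_zero_or_pos with rfl | hn
    · simp [hj]
    · gcongr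
      · exact_mod_cast hn
      · omega
  calc ∑' n : ℕ, 1 / (n : ℝ) ^ (2 * j)
      ≤ ∑' n : ℕ, 1 / (n : ℝ) ^ 2 :=
        (hasSum_zeta_nat hj).summable.tsum_le_tsum hle hasSum_zeta_two.summable
    _ = π ^ 2 / 6 := hasSum_zeta_two.tsum_eq
    _ ≤ 2 := by nlinarith [pi_lt_d2, pi_pos]

lemma abs_bernoulli_le (n : ℕ) : |(bernoulli n : ℝ)| ≤ 4 * n ! / (2 * π) ^ n := by
  rcases n.even_or_odd' with ⟨j, rfl | rfl⟩
  · rcases eq_or_ne j 0 with rfl | hj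
    · simp
    have habs := congrArg abs (hasSum_zeta_nat hj).tsum_eq
    rw [abs_of_nonneg (tsum_nonneg fun n => by positivity)] at habs
    simp only [abs_div, abs_mul, abs_pow, abs_neg, abs_one, one_pow, one_mul, abs_two,
      abs_of_pos pi_pos, Nat.abs_cast] at habs
    have hle := tsum_one_div_nat_pow_two_mul_le_two hj
    rw [habs, div_le_iff₀ (by positivity)] at hle
    have h2 : (2 : ℝ) ^ (2 * j) = 2 * 2 ^ (2 * j - 1) :=
      (mul_pow_sub_one (by omega) _).symm
    rw [le_div_iff₀ (by positivity), mul_pow, h2]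
    nlinarith [pi_pos]
  · rcases eq_or_ne j 0 with rfl | hj
    · rw [mul_zero, zero_add, bernoulli_one, le_div_iff₀ (by positivity)]
      norm_num
      linarith [pi_lt_d2]
    · rw [bernoulli_eq_zero_of_odd (odd_two_mul_add_one j) (by omega)]
      simp only [Rat.cast_zero, abs_zero]
      positivity

lemma summable_norm_bernoulli_div_factorial_mul_pow {w : ℂ} (hw : ‖w‖ < 2 * π) :
    Summable fun n => ‖(bernoulli n : ℂ) / n ! * w ^ n‖ := by
  refine .of_nonneg_of_le (fun n => norm_nonneg _) (fun n => ?_)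
    ((summable_geometric_of_lt_one (by positivity) ((div_lt_one (by positivity)).2 hw)).mul_left 4)
  rw [norm_mul, norm_div, ← Complex.ofReal_ratCast, Complex.norm_real, Real.norm_eq_abs,
    Complex.norm_natCast, norm_pow, div_pow]
  have hBn : |(bernoulli n : ℝ)| / n ! ≤ 4 / (2 * π) ^ n := by
    rw [div_le_iff₀ (by positivity), div_mul_eq_mul_div]
    exact abs_bernoulli_le n
  calc |(bernoulli n : ℝ)| / n ! * ‖w‖ ^ n ≤ 4 / (2 * π) ^ n * ‖w‖ ^ n := by gcongr
    _ = 4 * (‖w‖ ^ n / (2 * π) ^ n) := by ring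

open PowerSeries in
lemma hasSum_bernoulli_div_factorial_mul_pow {w : ℂ} (hw : ‖w‖ < 2 * π)
    (hexp : cexp w ≠ 1) :
    HasSum (fun n => (bernoulli n : ℂ) / n ! * w ^ n) (w / (cexp w - 1)) := by
  have hcoeffB (n : ℕ) : coeff n (bernoulliPowerSeries ℂ) = (bernoulli n : ℂ) / n ! := by
    simp [bernoulliPowerSeries]
  have hcoeffE (n : ℕ) : coeff n (exp ℂ) = 1 / n ! := by
    simp [coeff_exp]
  have hB : Summable fun n => ‖coeff n (bernoulliPowerSeries ℂ) * w ^ n‖ := by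
    simpa only [hcoeffB] using summable_norm_bernoulli_div_factorial_mul_pow hw
  have hE : Summable fun n => ‖coeff n (exp ℂ) * w ^ n‖ := by
    refine (Real.summable_pow_div_factorial ‖w‖).congr fun n => ?_
    rw [hcoeffE, norm_mul, norm_div, norm_one, Complex.norm_natCast, norm_pow]
    ring
  have hsumE : ∑' n, coeff n (exp ℂ) * w ^ n = cexp w := by
    rw [Complex.exp_eq_exp_ℂ, ← (NormedSpace.expSeries_div_hasSum_exp w).tsum_eq]
    exact tsum_congr fun n => by rw [hcoeffE]; ring
  have hsumX : HasSum (fun n => coeff n (X : PowerSeries ℂ) * w ^ n) w := by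
    convert hasSum_ite_eq 1 w using 2 with n
    rw [coeff_X]
    split_ifs with h <;> simp [h]
  set β := ∑' n, coeff n (bernoulliPowerSeries ℂ) * w ^ n
  have hmul : β * cexp w = w + β := by
    have hprod := hasSum_coeff_mul_mul_pow hB hE
    rw [hsumE, show bernoulliPowerSeries ℂ * exp ℂ = X + bernoulliPowerSeries ℂ by
      linear_combination bernoulliPowerSeries_mul_exp_sub_one ℂ] at hprod
    refine hprod.unique ?_
    simpa only [map_add, add_mul] using hsumX.add hB.of_norm.hasSum
  have hβ : β = w / (cexp w - 1) := by
    rw [eq_div_iff (sub_ne_zero.2 hexp)]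
    linear_combination hmul
  rw [← hβ]
  exact hB.of_norm.hasSum.congr_fun fun n => by rw [hcoeffB]

noncomputable def powMulExpSum (N : ℕ) (z : ℂ) : ℂ :=
  ∑' n : ℕ, ((n : ℂ) + 1) ^ N * cexp (-((n : ℂ) + 1) * z)

lemma norm_pow_mul_exp_neg (N n : ℕ) (w : ℂ) :
    ‖((n : ℂ) + 1) ^ N * cexp (-((n : ℂ) + 1) * w)‖
      = ((n + 1 : ℕ) : ℝ) ^ N * Real.exp (-w.re * (n + 1 : ℕ)) := by
  rw [norm_mul, norm_pow, Complex.norm_exp, ← Nat.cast_add_one, Complex.norm_natCast,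
    neg_mul, neg_re, ← ofReal_natCast, re_ofReal_mul, neg_mul, mul_comm w.re]

lemma summable_pow_mul_exp_neg_succ (N : ℕ) {c : ℝ} (hc : 0 < c) :
    Summable fun n : ℕ => ((n + 1 : ℕ) : ℝ) ^ N * Real.exp (-c * (n + 1 : ℕ)) :=
  (summable_nat_add_iff 1).2 (Real.summable_pow_mul_exp_neg_nat_mul N hc)

lemma hasDerivAt_powMulExpSum (N : ℕ) {z : ℂ} (hz : 0 < z.re) :
    HasDerivAt (powMulExpSum N) (-powMulExpSum (N + 1) z) z := by
  have hderiv (n : ℕ) (w : ℂ) :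
      HasDerivAt (fun w => ((n : ℂ) + 1) ^ N * cexp (-((n : ℂ) + 1) * w))
        (-(((n : ℂ) + 1) ^ (N + 1) * cexp (-((n : ℂ) + 1) * w))) w := by
    refine ((((hasDerivAt_id' w).const_mul (-((n : ℂ) + 1))).cexp).const_mul
      (((n : ℂ) + 1) ^ N)).congr_deriv ?_
    ring
  have hbound (n : ℕ) (w : ℂ) (hw : w ∈ {w : ℂ | z.re / 2 < w.re}) :
      ‖-(((n : ℂ) + 1) ^ (N + 1) * cexp (-((n : ℂ) + 1) * w))‖
        ≤ ((n + 1 : ℕ) : ℝ) ^ (N + 1) * Real.exp (-(z.re / 2) * (n + 1 : ℕ)) := by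
    rw [norm_neg, norm_pow_mul_exp_neg]
    gcongr
    exact hw.le
  have h := hasDerivAt_tsum_of_isPreconnected (summable_pow_mul_exp_neg_succ (N + 1) (half_pos hz))
    (isOpen_lt continuous_const Complex.continuous_re)
    (convex_halfSpace_re_gt (z.re / 2)).isPreconnected (fun n w _ => hderiv n w) hbound
    (half_lt_self hz) (Summable.of_norm ((summable_pow_mul_exp_neg_succ N hz).congr fun n =>
      (norm_pow_mul_exp_neg N n z).symm)) (half_lt_self hz)
  exact h.congr_deriv tsum_neg

lemma exp_ne_one_of_re_pos {z : ℂ} (hz : 0 < z.re) : cexp z ≠ 1 := fun h => by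
  have h' := congrArg norm h
  rw [Complex.norm_exp, norm_one] at h'
  exact (Real.one_lt_exp_iff.2 hz).ne' h'

lemma natCast_mul_re_pos {k : ℕ} (hk : 0 < k) {z : ℂ} (hz : 0 < z.re) : 0 < ((k : ℂ) * z).re := by
  simpa using mul_pos (Nat.cast_pos.2 hk) hz

lemma powMulExpSum_zero {z : ℂ} (hz : 0 < z.re) : powMulExpSum 0 z = 1 / (cexp z - 1) := by
  have hq : ‖cexp (-z)‖ < 1 := by
    rw [Complex.norm_exp, Complex.neg_re, Real.exp_lt_one_iff]
    linarith
  have hterm (n : ℕ) :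
      ((n : ℂ) + 1) ^ 0 * cexp (-((n : ℂ) + 1) * z) = cexp (-z) * cexp (-z) ^ n := by
    rw [pow_zero, one_mul, ← Complex.exp_nat_mul, ← Complex.exp_add]
    ring_nf
  have hexp : cexp z - 1 ≠ 0 := sub_ne_zero.2 (exp_ne_one_of_re_pos hz)
  rw [powMulExpSum, tsum_congr hterm, tsum_mul_left, tsum_geometric_of_norm_lt_one hq,
    Complex.exp_neg]
  field_simp

noncomputable def bernoulliDiffCoeff (k N m : ℕ) : ℂ :=
  (1 - (k : ℂ) ^ (m + N + 1)) * ((bernoulli (N + m + 1) : ℚ) : ℂ) /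
    (((N + m + 1 : ℕ) : ℂ) * ((Nat.factorial m : ℕ) : ℂ))

lemma norm_bernoulliDiffCoeff_le {k : ℕ} (hk : 0 < k) (N m : ℕ) :
    ‖bernoulliDiffCoeff k N m‖
      ≤ 8 * (m + N).descFactorial N * ((k : ℝ) / (2 * π)) ^ (m + N + 1) := by
  have hk1 : (1 : ℝ) ≤ (k : ℝ) ^ (m + N + 1) := one_le_pow₀ (by exact_mod_cast hk)
  have hnum : ‖1 - (k : ℂ) ^ (m + N + 1)‖ ≤ 2 * (k : ℝ) ^ (m + N + 1) := by
    refine (norm_sub_le _ _).trans ?_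
    rw [norm_one, norm_pow, Complex.norm_natCast]
    linarith
  have hB :
      ‖((bernoulli (N + m + 1) : ℚ) : ℂ)‖ ≤ 4 * (N + m + 1)! / (2 * π) ^ (m + N + 1) := by
    rw [← Complex.ofReal_ratCast, Complex.norm_real, Real.norm_eq_abs,
      show m + N + 1 = N + m + 1 by ring]
    exact abs_bernoulli_le _
  have hfac : (N + m + 1)! = (N + m + 1) * ((m + N).descFactorial N * m !) := by
    rw [Nat.factorial_succ, add_comm N m, ← Nat.factorial_mul_descFactorial (Nat.le_add_left N m),
      Nat.add_sub_cancel, mul_comm m !]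
  rw [bernoulliDiffCoeff, norm_div, norm_mul, norm_mul, Complex.norm_natCast, Complex.norm_natCast,
    div_le_iff₀ (by positivity)]
  calc ‖1 - (k : ℂ) ^ (m + N + 1)‖ * ‖((bernoulli (N + m + 1) : ℚ) : ℂ)‖
      ≤ 2 * (k : ℝ) ^ (m + N + 1) * (4 * (N + m + 1)! / (2 * π) ^ (m + N + 1)) := by
        gcongr
    _ = _ := by
        rw [hfac, div_pow]
        push_cast
        field_simp
        ring

lemma summable_norm_bernoulliDiffCoeff_mul_pow {k : ℕ} (hk : 0 < k) (N : ℕ) {r : ℝ}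
    (hr0 : 0 ≤ r) (hr : k * r < 2 * π) : Summable fun m => ‖bernoulliDiffCoeff k N m‖ * r ^ m := by
  set ρ : ℝ := k / (2 * π)
  have hq : ‖ρ * r‖ < 1 := by
    rw [Real.norm_of_nonneg (by positivity), div_mul_eq_mul_div, div_lt_one (by positivity)]
    exact hr
  refine .of_nonneg_of_le (fun m => by positivity) (fun m => ?_)
    ((summable_descFactorial_mul_geometric_of_norm_lt_one N hq).mul_left (8 * ρ ^ (N + 1)))
  calc ‖bernoulliDiffCoeff k N m‖ * r ^ m
      ≤ 8 * (m + N).descFactorial N * ρ ^ (m + N + 1) * r ^ m := by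
        gcongr
        exact norm_bernoulliDiffCoeff_le hk N m
    _ = 8 * ρ ^ (N + 1) * ((m + N).descFactorial N * (ρ * r) ^ m) := by ring

lemma bernoulliDiffCoeff_succ (k N m : ℕ) :
    ((m : ℂ) + 1) * bernoulliDiffCoeff k N (m + 1) = bernoulliDiffCoeff k (N + 1) m := by
  rw [bernoulliDiffCoeff, bernoulliDiffCoeff, show m + 1 + N + 1 = m + (N + 1) + 1 by ring,
    show N + (m + 1) + 1 = N + 1 + m + 1 by ring, Nat.factorial_succ]
  push_cast
  field_simp

noncomputable def bernoulliDiffSeries (k N : ℕ) (z : ℂ) : ℂ :=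
  ∑' m, bernoulliDiffCoeff k N m * z ^ m

lemma hasDerivAt_bernoulliDiffSeries {k : ℕ} (hk : 0 < k) (N : ℕ) {z : ℂ}
    (hz : k * ‖z‖ < 2 * π) :
    HasDerivAt (bernoulliDiffSeries k N) (bernoulliDiffSeries k (N + 1) z) z := by
  have hkpos : (0 : ℝ) < k := by exact_mod_cast hk
  obtain ⟨r, hzr, hr⟩ := exists_between ((lt_div_iff₀' hkpos).2 hz)
  have hsum :
      Summable fun m : ℕ => ‖((m : ℂ) + 1) * bernoulliDiffCoeff k N (m + 1)‖ * r ^ m := by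
    simp only [bernoulliDiffCoeff_succ]
    exact summable_norm_bernoulliDiffCoeff_mul_pow hk (N + 1) ((norm_nonneg z).trans hzr.le)
      ((lt_div_iff₀' hkpos).1 hr)
  have h := hasDerivAt_tsum_mul_pow hzr hsum
  simp only [bernoulliDiffCoeff_succ] at h
  exact h

lemma hasSum_bernoulliDiffCoeff_zero_mul_pow {k : ℕ} (hk : 0 < k) {z : ℂ} (hz : 0 < z.re)
    (hkz : k * ‖z‖ < 2 * π) :
    HasSum (fun m => bernoulliDiffCoeff k 0 m * z ^ m)
      (1 / (cexp z - 1) - k / (cexp (k * z) - 1)) := by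
  have hz0 : z ≠ 0 := fun h => by simp [h] at hz
  have hkz_re := natCast_mul_re_pos hk hz
  have hkz_norm : ‖(k : ℂ) * z‖ < 2 * π := by rwa [norm_mul, Complex.norm_natCast]
  have htail {w : ℂ} (hw : ‖w‖ < 2 * π) (hexp : cexp w ≠ 1) :
      HasSum (fun m => (bernoulli (m + 1) : ℂ) / (m + 1)! * w ^ (m + 1))
        (w / (cexp w - 1) - 1) := by
    simpa using (hasSum_nat_add_iff' 1).2 (hasSum_bernoulli_div_factorial_mul_pow hw hexp)
  have hz_norm : ‖z‖ < 2 * π :=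
    hkz.trans_le' (le_mul_of_one_le_left (norm_nonneg z) (by exact_mod_cast hk))
  have hsub := ((htail hz_norm (exp_ne_one_of_re_pos hz)).sub
    (htail hkz_norm (exp_ne_one_of_re_pos hkz_re))).div_const z
  have hexp₁ := sub_ne_zero.2 (exp_ne_one_of_re_pos hz)
  have hexpₖ := sub_ne_zero.2 (exp_ne_one_of_re_pos hkz_re)
  rw [show 1 / (cexp z - 1) - k / (cexp (k * z) - 1)
      = (z / (cexp z - 1) - 1 - (k * z / (cexp (k * z) - 1) - 1)) / z by field_simp; ring]
  refine hsub.congr_fun fun m => ?_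
  simp only [bernoulliDiffCoeff, add_zero, zero_add, Nat.factorial_succ]
  push_cast
  field_simp
  ring

lemma powMulExpSum_sub_eq_bernoulliDiffSeries {k : ℕ} (hk : 0 < k) (N : ℕ) {z : ℂ}
    (hz : 0 < z.re) (hkz : k * ‖z‖ < 2 * π) :
    powMulExpSum N z - k ^ (N + 1) * powMulExpSum N (k * z)
      = (-1) ^ N * bernoulliDiffSeries k N z := by
  induction N generalizing z with
  | zero =>
    rw [powMulExpSum_zero hz, powMulExpSum_zero (natCast_mul_re_pos hk hz), pow_zero,
      one_mul, zero_add, pow_one, bernoulliDiffSeries,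
      (hasSum_bernoulliDiffCoeff_zero_mul_pow hk hz hkz).tsum_eq]
    ring
  | succ N ih =>
    have hU : {w : ℂ | 0 < w.re ∧ k * ‖w‖ < 2 * π} ∈ nhds z :=
      (((isOpen_lt continuous_const Complex.continuous_re).inter
        (isOpen_lt (continuous_const.mul continuous_norm) continuous_const)).mem_nhds ⟨hz, hkz⟩)
    have hscaled : HasDerivAt (fun w => powMulExpSum N (k * w))
        (-powMulExpSum (N + 1) (k * z) * (k * 1)) z :=
      (hasDerivAt_powMulExpSum N (natCast_mul_re_pos hk hz)).comp z
        ((hasDerivAt_id' z).const_mul (k : ℂ))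
    have hlhs : HasDerivAt (fun w => powMulExpSum N w - k ^ (N + 1) * powMulExpSum N (k * w))
        (-powMulExpSum (N + 1) z + k ^ (N + 2) * powMulExpSum (N + 1) (k * z)) z :=
      ((hasDerivAt_powMulExpSum N hz).sub (hscaled.const_mul _)).congr_deriv (by ring)
    have hrhs := ((hasDerivAt_bernoulliDiffSeries hk N hkz).const_mul ((-1 : ℂ) ^ N))
      |>.congr_of_eventuallyEq (Filter.eventuallyEq_of_mem hU fun w hw => ih hw.1 hw.2)
    linear_combination -(hlhs.unique hrhs)

theorem stmt9_general (k N : ℕ) (z : ℂ) (hz : 0 < z.re)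
    (hz2 : ‖z‖ < 2 * π / k) :
    Summable (fun m : ℕ =>
      ‖(1 - (k : ℂ) ^ (m + N + 1)) * ((bernoulli (N + m + 1) : ℚ) : ℂ) /
          (((N + m + 1 : ℕ) : ℂ) * ((Nat.factorial m : ℕ) : ℂ)) * z ^ m‖) ∧
    (-1 : ℂ) ^ N *
        ((∑' n : ℕ, ((n : ℂ) + 1) ^ N * Complex.exp (-((n : ℂ) + 1) * z)) -
          (k : ℂ) ^ (N + 1) *
            ∑' n : ℕ, ((n : ℂ) + 1) ^ N * Complex.exp (-(k : ℂ) * ((n : ℂ) + 1) * z)) =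
      ∑' m : ℕ,
        (1 - (k : ℂ) ^ (m + N + 1)) * ((bernoulli (N + m + 1) : ℚ) : ℂ) /
          (((N + m + 1 : ℕ) : ℂ) * ((Nat.factorial m : ℕ) : ℂ)) * z ^ m := by
  -- `2 * π / 0 = 0`, so `hz2` rules out `k = 0`
  have hk : 0 < k := Nat.pos_of_ne_zero fun h => by
    simp only [h, CharP.cast_eq_zero, div_zero] at hz2
    exact (norm_nonneg z).not_gt hz2
  have hkz : k * ‖z‖ < 2 * π := (lt_div_iff₀' (by exact_mod_cast hk)).1 hz2
  refine ⟨(summable_norm_bernoulliDiffCoeff_mul_pow hk N (norm_nonneg z) hkz).congr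
    fun m => by rw [norm_mul, norm_pow, bernoulliDiffCoeff], ?_⟩
  have hscaled : ∑' n : ℕ, ((n : ℂ) + 1) ^ N * cexp (-(k : ℂ) * ((n : ℂ) + 1) * z)
      = powMulExpSum N (k * z) := tsum_congr fun n => by ring_nf
  rw [hscaled]
  change (-1) ^ N * (powMulExpSum N z - k ^ (N + 1) * powMulExpSum N (k * z))
    = bernoulliDiffSeries k N z
  rw [powMulExpSum_sub_eq_bernoulliDiffSeries hk N hz hkz, ← mul_assoc, ← mul_pow, neg_one_mul,
    neg_neg, one_pow, one_mul]

theorem stmt9 (k N : ℕ) (hk : 2 ≤ k) (z : ℂ) (hz : 0 < z.re)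
    (hz2 : ‖z‖ < 2 * π / k) :
    Summable (fun m : ℕ =>
      ‖(1 - (k : ℂ) ^ (m + N + 1)) * ((bernoulli (N + m + 1) : ℚ) : ℂ) /
          (((N + m + 1 : ℕ) : ℂ) * ((Nat.factorial m : ℕ) : ℂ)) * z ^ m‖) ∧
    (-1 : ℂ) ^ N *
        ((∑' n : ℕ, ((n : ℂ) + 1) ^ N * Complex.exp (-((n : ℂ) + 1) * z)) -
          (k : ℂ) ^ (N + 1) *
            ∑' n : ℕ, ((n : ℂ) + 1) ^ N * Complex.exp (-(k : ℂ) * ((n : ℂ) + 1) * z)) =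
      ∑' m : ℕ,
        (1 - (k : ℂ) ^ (m + N + 1)) * ((bernoulli (N + m + 1) : ℚ) : ℂ) /
          (((N + m + 1 : ℕ) : ℂ) * ((Nat.factorial m : ℕ) : ℂ)) * z ^ m :=
  stmt9_general k N z hz hz2
end

section
/- Let b be a real number and let f : [b, ∞) → ℝ be differentiable, with derivative f′ monotonically decreasing on [b, ∞) and f′(b) < 0. Then Σ_{n=0}^∞ e^{f(b+n)} ≤ e^{f(b)} / (1 − e^{f′(b)}), the series on the left converging. -/
/-!
Since `f'` is decreasing, `f` lies below its tangent line at `b`, so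
`e^{f(b+n)} ≤ e^{f(b)} (e^{f'(b)})^n`: the series is dominated by a geometric series
of ratio `e^{f'(b)} < 1`.
-/

open Real

theorem le_tangent_of_hasDerivWithinAt_of_antitoneOn {f f' : ℝ → ℝ} {b : ℝ}
    (hderiv : ∀ x ∈ Set.Ici b, HasDerivWithinAt f (f' x) (Set.Ici b) x)
    (hanti : AntitoneOn f' (Set.Ici b)) {x : ℝ} (hx : b ≤ x) :
    f x ≤ f b + f' b * (x - b) := by
  have hderivAt : ∀ y ∈ interior (Set.Ici b), HasDerivAt f (f' y) y := fun y hy =>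
    (hderiv y (interior_subset hy)).hasDerivAt (mem_interior_iff_mem_nhds.mp hy)
  have hslope := (convex_Ici b).image_sub_le_mul_sub_of_deriv_le
    (fun y hy => (hderiv y hy).continuousWithinAt)
    (fun y hy => (hderivAt y hy).differentiableAt.differentiableWithinAt)
    (fun y hy => by
      rw [(hderivAt y hy).deriv]
      rw [interior_Ici] at hy
      exact hanti Set.self_mem_Ici (Set.mem_Ici.mpr (le_of_lt hy)) (le_of_lt hy))
    b Set.self_mem_Ici x hx hx
  linarith

theorem summable_and_tsum_le_of_le_geometric {u : ℕ → ℝ} {a r : ℝ}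
    (hu : ∀ n, 0 ≤ u n) (hr₀ : 0 ≤ r) (hr₁ : r < 1) (hle : ∀ n, u n ≤ a * r ^ n) :
    Summable u ∧ ∑' n, u n ≤ a / (1 - r) := by
  have hgeom : Summable (fun n : ℕ => a * r ^ n) :=
    (summable_geometric_of_lt_one hr₀ hr₁).mul_left a
  have hsum : Summable u := hgeom.of_nonneg_of_le hu hle
  refine ⟨hsum, ?_⟩
  calc ∑' n, u n ≤ ∑' n, a * r ^ n := hsum.tsum_le_tsum hle hgeom
    _ = a / (1 - r) := by
      rw [tsum_mul_left, tsum_geometric_of_lt_one hr₀ hr₁, div_eq_mul_inv]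

theorem stmt15 (b : ℝ) (f f' : ℝ → ℝ)
    (hderiv : ∀ x ∈ Set.Ici b, HasDerivWithinAt f (f' x) (Set.Ici b) x)
    (hanti : AntitoneOn f' (Set.Ici b)) (hneg : f' b < 0) :
    Summable (fun n : ℕ => Real.exp (f (b + n))) ∧
    ∑' n : ℕ, Real.exp (f (b + n)) ≤ Real.exp (f b) / (1 - Real.exp (f' b)) := by
  refine summable_and_tsum_le_of_le_geometric (fun n => (exp_pos _).le) (exp_pos _).le
    (exp_lt_one_iff.mpr hneg) fun n => ?_
  have htangent := le_tangent_of_hasDerivWithinAt_of_antitoneOn hderiv hanti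
    (le_add_of_nonneg_right (Nat.cast_nonneg n) : b ≤ b + n)
  calc exp (f (b + n)) ≤ exp (f b + n * f' b) := by
        gcongr
        linarith
    _ = exp (f b) * exp (f' b) ^ n := by rw [exp_add, exp_nat_mul]
end

section
/- Let k, t ≥ 2 and 1 ≤ r ≤ t be integers, and let z = η + iy be a complex number with 0 < η < 1/k. Then |L_k(r,t;e^{−z})| ≤ 3.1/η². -/
open Real Complex

/-- `L_k(r,t;q) = Σ_{m ≥ 1, m ≡ r (mod t)} ( q^m/(1 − q^m) − k·q^{km}/(1 − q^{km}) )`. -/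
noncomputable def Lk (k r t : ℕ) (q : ℂ) : ℂ :=
  ∑' m : {m : ℕ // 1 ≤ m ∧ m % t = r % t},
    (q ^ (m : ℕ) / (1 - q ^ (m : ℕ)) -
      (k : ℂ) * q ^ (k * (m : ℕ)) / (1 - q ^ (k * (m : ℕ))))

/-- For `0 < y < 1` and `k ≥ 1`, `k y^k/(1-y^k) ≤ y/(1-y)`. -/
lemma aux_geom (y : ℝ) (hy0 : 0 < y) (hy1 : y < 1) (k : ℕ) (hk : 1 ≤ k) :
    (k : ℝ) * y ^ k / (1 - y ^ k) ≤ y / (1 - y) := by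
  have hyk : y ^ k < 1 := pow_lt_one₀ hy0.le hy1 (by omega)
  rw [div_le_div_iff₀ (by linarith) (by linarith)]
  have hsum : (1 : ℝ) - y ^ k = (1 - y) * ∑ i ∈ Finset.range k, y ^ i := by
    have h := geom_sum_mul y k
    linear_combination h
  have hS : (k : ℝ) * y ^ (k - 1) ≤ ∑ i ∈ Finset.range k, y ^ i := by
    have := Finset.card_nsmul_le_sum (Finset.range k) (fun i => y ^ i) (y ^ (k - 1))
      (fun i hi => pow_le_pow_of_le_one hy0.le hy1.le
        (by simp only [Finset.mem_range] at hi; omega))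
    simpa [nsmul_eq_mul] using this
  have hpow : y ^ k = y * y ^ (k - 1) := by
    rw [← pow_succ']
    congr 1
    omega
  rw [hsum, hpow]
  have h1y : (0:ℝ) ≤ 1 - y := by linarith
  nlinarith [mul_le_mul_of_nonneg_right hS (mul_nonneg hy0.le h1y),
    pow_nonneg hy0.le (k - 1)]

/-- Termwise bound. -/
lemma term_bound (q : ℂ) (x : ℝ) (hq : ‖q‖ = x) (hx0 : 0 < x) (hx1 : x < 1)
    (k m : ℕ) (hk : 1 ≤ k) (hm : 1 ≤ m) :
    ‖q ^ m / (1 - q ^ m) - (k : ℂ) * q ^ (k * m) / (1 - q ^ (k * m))‖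
      ≤ 2 * x ^ m / (1 - x) := by
  have h1x : (0:ℝ) < 1 - x := by linarith
  have hxm : x ^ m < 1 := pow_lt_one₀ hx0.le hx1 (by omega)
  have hxm0 : (0:ℝ) < x ^ m := pow_pos hx0 m
  have h1xm : (0:ℝ) < 1 - x ^ m := by linarith
  have hnorm : ∀ n : ℕ, 1 - x ^ n ≤ ‖1 - q ^ n‖ := by
    intro n
    have := norm_sub_norm_le (1 : ℂ) (q ^ n)
    simpa [norm_pow, hq] using this
  have hxm_le : x ^ m ≤ x := by
    calc x ^ m ≤ x ^ 1 := pow_le_pow_of_le_one hx0.le hx1.le hm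
    _ = x := pow_one x
  -- first term
  have hA : ‖q ^ m / (1 - q ^ m)‖ ≤ x ^ m / (1 - x) := by
    rw [norm_div, norm_pow, hq]
    calc x ^ m / ‖1 - q ^ m‖ ≤ x ^ m / (1 - x ^ m) :=
        div_le_div_of_nonneg_left hxm0.le h1xm (hnorm m)
      _ ≤ x ^ m / (1 - x) := by
        apply div_le_div_of_nonneg_left hxm0.le h1x
        nlinarith
  -- second term
  have hkm : x ^ (k * m) < 1 := pow_lt_one₀ hx0.le hx1 (by positivity)
  have h1km : (0:ℝ) < 1 - x ^ (k * m) := by linarith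
  have hB : ‖(k : ℂ) * q ^ (k * m) / (1 - q ^ (k * m))‖ ≤ x ^ m / (1 - x) := by
    rw [norm_div, norm_mul, norm_pow, hq, Complex.norm_natCast]
    have step1 : (k : ℝ) * x ^ (k * m) / ‖1 - q ^ (k * m)‖
        ≤ (k : ℝ) * x ^ (k * m) / (1 - x ^ (k * m)) := by
      apply div_le_div_of_nonneg_left _ h1km (hnorm (k * m))
      positivity
    have step2 : (k : ℝ) * x ^ (k * m) / (1 - x ^ (k * m))
        ≤ x ^ m / (1 - x ^ m) := by
      have h := aux_geom (x ^ m) hxm0 hxm k hk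
      rw [← pow_mul, mul_comm m k] at h
      exact h
    have step3 : x ^ m / (1 - x ^ m) ≤ x ^ m / (1 - x) := by
      apply div_le_div_of_nonneg_left hxm0.le h1x
      nlinarith
    linarith
  calc ‖q ^ m / (1 - q ^ m) - (k : ℂ) * q ^ (k * m) / (1 - q ^ (k * m))‖
      ≤ ‖q ^ m / (1 - q ^ m)‖ + ‖(k : ℂ) * q ^ (k * m) / (1 - q ^ (k * m))‖ :=
        norm_sub_le _ _
    _ ≤ x ^ m / (1 - x) + x ^ m / (1 - x) := add_le_add hA hB
    _ = 2 * x ^ m / (1 - x) := by ring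

theorem stmt16 (k t r : ℕ) (hk : 2 ≤ k) (ht : 2 ≤ t) (hr1 : 1 ≤ r) (hrt : r ≤ t)
    (z : ℂ) (hη : 0 < z.re) (hη' : z.re < 1 / k) :
    ‖Lk k r t (Complex.exp (-z))‖ ≤ 3.1 / z.re ^ 2 := by
  set η := z.re with hηdef
  set q := Complex.exp (-z) with hqdef
  set x := Real.exp (-η) with hxdef
  have hq : ‖q‖ = x := by
    rw [hqdef, hxdef]
    simpa using Complex.norm_exp (-z)
  have hx0 : 0 < x := Real.exp_pos _
  have hx1 : x < 1 := by
    rw [hxdef, Real.exp_lt_one_iff]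
    linarith
  have h1x : (0:ℝ) < 1 - x := by linarith
  -- the bounding sequence over ℕ
  set g : ℕ → ℝ := fun n => 2 / (1 - x) * x ^ (n + 1) with hgdef
  have hgsum : Summable g := by
    simp only [hgdef, pow_succ']
    exact ((summable_geometric_of_lt_one hx0.le hx1).mul_left x).mul_left _
  set S := {m : ℕ // 1 ≤ m ∧ m % t = r % t}
  set f : S → ℂ := fun m =>
    q ^ (m : ℕ) / (1 - q ^ (m : ℕ)) -
      (k : ℂ) * q ^ (k * (m : ℕ)) / (1 - q ^ (k * (m : ℕ))) with hfdef
  have hf_le : ∀ m : S, ‖f m‖ ≤ g ((m : ℕ) - 1) := by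
    intro m
    have hm1 : 1 ≤ (m : ℕ) := m.2.1
    have h := term_bound q x hq hx0 hx1 k (m : ℕ) (by omega) hm1
    have hpow : (m : ℕ) - 1 + 1 = (m : ℕ) := by omega
    rw [hgdef]
    simp only [hpow]
    calc ‖f m‖ ≤ 2 * x ^ (m : ℕ) / (1 - x) := h
      _ = 2 / (1 - x) * x ^ (m : ℕ) := by ring
  have hinj : Function.Injective (fun m : S => (m : ℕ) - 1) := by
    intro a b hab
    have ha := a.2.1
    have hb := b.2.1
    ext
    simp only at hab
    omega
  have hfnorm : Summable fun m : S => ‖f m‖ := by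
    apply Summable.of_nonneg_of_le (fun m => norm_nonneg _) hf_le
    exact hgsum.comp_injective hinj
  have hbound : ‖∑' m : S, f m‖ ≤ 2 * x / (1 - x) ^ 2 := by
    calc ‖∑' m : S, f m‖ ≤ ∑' m : S, ‖f m‖ := norm_tsum_le_tsum_norm hfnorm
      _ ≤ ∑' n : ℕ, g n :=
        Summable.tsum_le_tsum_of_inj _ hinj (fun c _ => by positivity) hf_le hfnorm hgsum
      _ = 2 * x / (1 - x) ^ 2 := by
        simp only [hgdef, pow_succ']
        rw [tsum_mul_left, tsum_mul_left, tsum_geometric_of_lt_one hx0.le hx1]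
        field_simp
  have hLk : Lk k r t q = ∑' m : S, f m := rfl
  rw [hLk]
  refine hbound.trans ?_
  -- final numeric inequality: 2x/(1-x)^2 ≤ 3.1/η^2
  have hsinh : η / 2 < Real.sinh (η / 2) := Real.self_lt_sinh_iff.mpr (by linarith)
  have hsinh_eq : Real.sinh (η / 2) = (Real.exp (η / 2) - Real.exp (-(η / 2))) / 2 :=
    Real.sinh_eq _
  have hkey : η * Real.exp (-(η / 2)) ≤ 1 - x := by
    have hmul : Real.exp (-(η / 2)) * Real.exp (-(η / 2)) = x := by
      rw [hxdef, ← Real.exp_add]; ring_nf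
    have hone : Real.exp (η / 2) * Real.exp (-(η / 2)) = 1 := by
      rw [← Real.exp_add]; simp
    have he : η < Real.exp (η / 2) - Real.exp (-(η / 2)) := by
      rw [hsinh_eq] at hsinh; linarith
    have hexp_pos : 0 < Real.exp (-(η / 2)) := Real.exp_pos _
    nlinarith [mul_le_mul_of_nonneg_right he.le hexp_pos.le]
  have hsq : η ^ 2 * x ≤ (1 - x) ^ 2 := by
    have hexp_pos : 0 < Real.exp (-(η / 2)) := Real.exp_pos _
    have hmul : Real.exp (-(η / 2)) * Real.exp (-(η / 2)) = x := by
      rw [hxdef, ← Real.exp_add]; ring_nf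
    nlinarith [mul_le_mul hkey hkey (by positivity) h1x.le]
  have hη2 : (0:ℝ) < η ^ 2 := by positivity
  have h2 : 2 * x / (1 - x) ^ 2 ≤ 2 / η ^ 2 := by
    rw [div_le_div_iff₀ (by positivity) hη2]
    nlinarith [hsq, hx0]
  have h3 : 2 / η ^ 2 ≤ 3.1 / η ^ 2 := by
    gcongr
    norm_num
  linarith
end

section
/- Let p(m) denote the number of partitions of m. For every real number c ≥ 2.35, one has Σ_{m=1}^∞ p(m)·e^{−cm} ≤ 23.6·e^{−c}. -/
open Real

lemma card_partition_le (n : ℕ) : Fintype.card (Nat.Partition n) ≤ 2 ^ (n - 1) := by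
  have hinj : Function.Injective (fun p : Nat.Partition n =>
      (⟨p.parts.sort (· ≤ ·),
        fun {i} hi => p.parts_pos (Multiset.mem_sort _ |>.mp hi),
        by rw [← Multiset.sum_coe, Multiset.sort_eq]; exact p.parts_sum⟩ : Composition n)) := by
    intro p q h
    have h2 : (p.parts.sort (· ≤ ·) : Multiset ℕ) = (q.parts.sort (· ≤ ·) : Multiset ℕ) := by
      exact congrArg _ (congrArg Composition.blocks h)
    ext1
    rwa [Multiset.sort_eq, Multiset.sort_eq] at h2
  calc Fintype.card (Nat.Partition n) ≤ Fintype.card (Composition n) :=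
        Fintype.card_le_of_injective _ hinj
    _ = 2 ^ (n - 1) := composition_card n

theorem stmt17 (c : ℝ) (hc : 2.35 ≤ c) :
    Summable (fun m : ℕ =>
      (Fintype.card (Nat.Partition (m + 1)) : ℝ) * Real.exp (-c * (m + 1))) ∧
    ∑' m : ℕ, (Fintype.card (Nat.Partition (m + 1)) : ℝ) * Real.exp (-c * (m + 1)) ≤
      23.6 * Real.exp (-c) := by
  set x : ℝ := 2 * Real.exp (-c) with hxdef
  have he : Real.exp (-c) ≤ 3 / 8 := by
    have h1 : Real.exp (-c) ≤ Real.exp (-1) := by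
      apply Real.exp_le_exp.mpr; linarith
    have h2 : Real.exp (-1) = (Real.exp 1)⁻¹ := by
      rw [Real.exp_neg]
    have h3 : (Real.exp 1)⁻¹ ≤ 3 / 8 := by
      rw [inv_le_comm₀ (Real.exp_pos 1) (by norm_num)]
      nlinarith [Real.exp_one_gt_d9]
    linarith [h2 ▸ h1]
  have hx0 : 0 ≤ x := by positivity
  have hx34 : x ≤ 3 / 4 := by rw [hxdef]; linarith
  have hx1 : x < 1 := lt_of_le_of_lt hx34 (by norm_num)
  have hterm : ∀ m : ℕ,
      (Fintype.card (Nat.Partition (m + 1)) : ℝ) * Real.exp (-c * (m + 1))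
        ≤ Real.exp (-c) * x ^ m := by
    intro m
    have hcard : (Fintype.card (Nat.Partition (m + 1)) : ℝ) ≤ 2 ^ m := by
      have := card_partition_le (m + 1); simp at this; exact_mod_cast this
    have hexp : Real.exp (-c * (m + 1)) = Real.exp (-c) ^ (m + 1) := by
      rw [← Real.exp_nat_mul]; congr 1; push_cast; ring
    calc (Fintype.card (Nat.Partition (m + 1)) : ℝ) * Real.exp (-c * (m + 1))
        ≤ 2 ^ m * Real.exp (-c) ^ (m + 1) := by
          rw [hexp]
          exact mul_le_mul_of_nonneg_right hcard (by positivity)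
      _ = Real.exp (-c) * x ^ m := by
          rw [hxdef, mul_pow, pow_succ]; ring
  have hg : Summable (fun m : ℕ => Real.exp (-c) * x ^ m) :=
    (summable_geometric_of_lt_one hx0 hx1).mul_left _
  have hnng : ∀ m : ℕ, 0 ≤ (Fintype.card (Nat.Partition (m + 1)) : ℝ) *
      Real.exp (-c * (m + 1)) := fun m => by positivity
  have hsum : Summable (fun m : ℕ =>
      (Fintype.card (Nat.Partition (m + 1)) : ℝ) * Real.exp (-c * (m + 1))) :=
    Summable.of_nonneg_of_le hnng hterm hg
  refine ⟨hsum, ?_⟩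
  have h1 : ∑' m : ℕ, (Fintype.card (Nat.Partition (m + 1)) : ℝ) * Real.exp (-c * (m + 1))
      ≤ ∑' m : ℕ, Real.exp (-c) * x ^ m := Summable.tsum_le_tsum hterm hsum hg
  have h2 : ∑' m : ℕ, Real.exp (-c) * x ^ m = Real.exp (-c) * (1 - x)⁻¹ := by
    rw [tsum_mul_left, tsum_geometric_of_lt_one hx0 hx1]
  have h3 : (1 - x)⁻¹ ≤ 4 := by
    rw [inv_le_comm₀ (by linarith) (by norm_num)]
    linarith
  have h4 : Real.exp (-c) * (1 - x)⁻¹ ≤ 23.6 * Real.exp (-c) := by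
    nlinarith [Real.exp_pos (-c)]
  linarith [h2 ▸ h1]
end

section
/- Let t ≥ 6 be an integer. Then D_2(t−1, t; t+3) = D_2(t, t; t+3) = 2. In particular, the strict inequality D_2(t−1,t;n) > D_2(t,t;n) fails at n = t + 3. -/
open Real

lemma small4 (s : Multiset ℕ) (hpos : ∀ i ∈ s, 0 < i) (hnd : s.Nodup)
    (hsum : s.sum = 4) : s = {4} ∨ s = {3, 1} := by
  have hsub : s ⊆ ({1,2,3,4} : Multiset ℕ) := by
    intro j hj
    have h1 := hpos j hj
    have h2 : j ≤ s.sum := Multiset.single_le_sum (fun x _ => Nat.zero_le x) j hj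
    rw [hsum] at h2
    interval_cases j <;> simp
  have hpow : s ∈ ({1,2,3,4} : Multiset ℕ).powerset :=
    Multiset.mem_powerset.2 ((Multiset.le_iff_subset hnd).2 hsub)
  have hp : ({1,2,3,4} : Multiset ℕ).powerset = (({0, {1}, {2}, {3}, {4}, {1,2}, {1,3}, {1,4}, {2,3}, {2,4}, {3,4}, {1,2,3}, {1,2,4}, {1,3,4}, {2,3,4}, {1,2,3,4}} : Multiset (Multiset ℕ))) := by decide
  rw [hp] at hpow
  fin_cases hpow <;> simp_all <;> decide

lemma small3 (s : Multiset ℕ) (hpos : ∀ i ∈ s, 0 < i) (hnd : s.Nodup)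
    (hsum : s.sum = 3) : s = {3} ∨ s = {2, 1} := by
  have hsub : s ⊆ ({1,2,3} : Multiset ℕ) := by
    intro j hj
    have h1 := hpos j hj
    have h2 : j ≤ s.sum := Multiset.single_le_sum (fun x _ => Nat.zero_le x) j hj
    rw [hsum] at h2
    interval_cases j <;> simp
  have hpow : s ∈ ({1,2,3} : Multiset ℕ).powerset :=
    Multiset.mem_powerset.2 ((Multiset.le_iff_subset hnd).2 hsub)
  have hp : ({1,2,3} : Multiset ℕ).powerset = (({0, {1}, {2}, {3}, {1,2}, {1,3}, {2,3}, {1,2,3}} : Multiset (Multiset ℕ))) := by decide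
  rw [hp] at hpow
  fin_cases hpow <;> simp_all <;> decide

/-- characterisation of residues among possible parts -/
lemma char_mod (u j c : ℕ) (hc : c = u + 5 ∨ c = u + 6) (h1 : 0 < j) (h2 : j ≤ u + 9) :
    j % (u + 6) = c % (u + 6) ↔ j = c := by
  have hcm : c % (u + 6) = c - (u+6) * (if c = u + 6 then 1 else 0) := by
    rcases hc with rfl | rfl
    · simp [Nat.mod_eq_of_lt (by omega : u + 5 < u + 6)]
    · simp
  rcases Nat.lt_or_ge j (u + 6) with hj | hj
  · rw [Nat.mod_eq_of_lt hj, hcm]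
    rcases hc with rfl | rfl <;> simp <;> omega
  · have : j % (u + 6) = j - (u + 6) := by
      rw [Nat.mod_eq_sub_mod hj, Nat.mod_eq_of_lt (by omega)]
    rw [this, hcm]
    rcases hc with rfl | rfl <;> simp <;> omega

/-- Main computation: for `c ∈ {u+5, u+6}`, the partition counting. -/
lemma Dk_calc (u c : ℕ) (hc : c = u + 5 ∨ c = u + 6)
    (sa sb : Multiset ℕ)
    (hsmall : ∀ s : Multiset ℕ, (∀ i ∈ s, 0 < i) → s.Nodup → s.sum = u + 9 - c →
      s = sa ∨ s = sb)
    (hsa_pos : ∀ i ∈ sa, 0 < i) (hsb_pos : ∀ i ∈ sb, 0 < i)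
    (hsa_nd : sa.Nodup) (hsb_nd : sb.Nodup)
    (hsa_sum : sa.sum = u + 9 - c) (hsb_sum : sb.sum = u + 9 - c)
    (hsa_c : c ∉ sa) (hsb_c : c ∉ sb) (hab : sa ≠ sb) :
    Dk 2 c (u + 6) (u + 9) = 2 := by
  have hcle : c ≤ u + 9 := by omega
  -- the two partitions
  have hsum_a : (c ::ₘ sa).sum = u + 9 := by rw [Multiset.sum_cons]; omega
  have hsum_b : (c ::ₘ sb).sum = u + 9 := by rw [Multiset.sum_cons]; omega
  set pa : Nat.Partition (u + 9) :=
    ⟨c ::ₘ sa, by intro i hi; rcases Multiset.mem_cons.1 hi with rfl | h; omega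
                  exact hsa_pos i h, hsum_a⟩ with hpa
  set pb : Nat.Partition (u + 9) :=
    ⟨c ::ₘ sb, by intro i hi; rcases Multiset.mem_cons.1 hi with rfl | h; omega
                  exact hsb_pos i h, hsum_b⟩ with hpb
  have hpab : pa ≠ pb := by
    intro h
    apply hab
    have := congrArg Nat.Partition.parts h
    simp only [hpa, hpb] at this
    exact (Multiset.cons_inj_right c).1 this
  -- rewrite Dk
  rw [Dk]
  have step1 : ∀ p ∈ Finset.univ.filter
      (fun p : Nat.Partition (u+9) => ∀ i ∈ p.parts, p.parts.count i < 2),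
      Multiset.card (p.parts.filter (fun j => j % (u+6) = c % (u+6)))
        = p.parts.count c := by
    intro p _
    have hf : p.parts.filter (fun j => j % (u+6) = c % (u+6))
        = p.parts.filter (fun j => c = j) := by
      apply Multiset.filter_congr
      intro j hj
      have h1 := p.parts_pos hj
      have h2 : j ≤ p.parts.sum := Multiset.single_le_sum (fun x _ => Nat.zero_le x) j hj
      rw [p.parts_sum] at h2
      constructor
      · intro h; exact ((char_mod u j c hc h1 h2).1 h).symm
      · rintro rfl; rfl
    rw [hf, ← Multiset.countP_eq_card_filter]
    rfl
  rw [Finset.sum_congr rfl step1]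
  rw [← Finset.sum_filter_of_ne (p := fun p : Nat.Partition (u+9) => c ∈ p.parts)
    (fun x _ hx => Multiset.count_ne_zero.1 hx)]
  have hset : (Finset.univ.filter
      (fun p : Nat.Partition (u+9) => ∀ i ∈ p.parts, p.parts.count i < 2)).filter
      (fun p => c ∈ p.parts) = {pa, pb} := by
    ext p
    simp only [Finset.mem_filter, Finset.mem_univ, true_and, Finset.mem_insert,
      Finset.mem_singleton]
    constructor
    · rintro ⟨hdist, hmem⟩
      have hnd : p.parts.Nodup := by
        rw [Multiset.nodup_iff_count_le_one]
        intro a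
        by_cases ha : a ∈ p.parts
        · exact Nat.lt_succ_iff.1 (hdist a ha)
        · simp [Multiset.count_eq_zero_of_notMem ha]
      set s := p.parts.erase c with hs
      have hcons : c ::ₘ s = p.parts := Multiset.cons_erase hmem
      have hssum : s.sum = u + 9 - c := by
        have := p.parts_sum
        rw [← hcons, Multiset.sum_cons] at this
        omega
      have hspos : ∀ i ∈ s, 0 < i := fun i hi =>
        p.parts_pos (Multiset.mem_of_mem_erase hi)
      have hsnd : s.Nodup := hnd.erase c
      rcases hsmall s hspos hsnd hssum with rfl | rfl
      · left
        apply Nat.Partition.ext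
        rw [← hcons]
      · right
        apply Nat.Partition.ext
        rw [← hcons]
    · rintro (rfl | rfl)
      · refine ⟨?_, by simp [hpa]⟩
        intro i hi
        have hnd : (c ::ₘ sa).Nodup := Multiset.nodup_cons.2 ⟨hsa_c, hsa_nd⟩
        have := (Multiset.nodup_iff_count_le_one.1 hnd) i
        simp only [hpa] at hi ⊢
        omega
      · refine ⟨?_, by simp [hpb]⟩
        intro i hi
        have hnd : (c ::ₘ sb).Nodup := Multiset.nodup_cons.2 ⟨hsb_c, hsb_nd⟩
        have := (Multiset.nodup_iff_count_le_one.1 hnd) i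
        simp only [hpb] at hi ⊢
        omega
  rw [hset, Finset.sum_pair hpab]
  have ca : pa.parts.count c = 1 := by
    simp [hpa, Multiset.count_cons_self, Multiset.count_eq_zero_of_notMem hsa_c]
  have cb : pb.parts.count c = 1 := by
    simp [hpb, Multiset.count_cons_self, Multiset.count_eq_zero_of_notMem hsb_c]
  rw [ca, cb]

theorem stmt19 (t : ℕ) (ht : 6 ≤ t) :
    Dk 2 (t - 1) t (t + 3) = 2 ∧ Dk 2 t t (t + 3) = 2 ∧
      ¬ (Dk 2 t t (t + 3) < Dk 2 (t - 1) t (t + 3)) := by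
  obtain ⟨u, rfl⟩ : ∃ u, t = u + 6 := ⟨t - 6, by omega⟩
  have h1 : u + 6 - 1 = u + 5 := by omega
  have h2 : u + 6 + 3 = u + 9 := by omega
  rw [h1, h2]
  have ha : Dk 2 (u + 5) (u + 6) (u + 9) = 2 := by
    apply Dk_calc u (u+5) (Or.inl rfl) {4} {3, 1}
    · intro s h1 h2 h3
      exact small4 s h1 h2 (by omega)
    all_goals simp <;> omega
  have hb : Dk 2 (u + 6) (u + 6) (u + 9) = 2 := by
    apply Dk_calc u (u+6) (Or.inr rfl) {3} {2, 1}
    · intro s h1 h2 h3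
      exact small3 s h1 h2 (by omega)
    all_goals simp <;> omega
  exact ⟨ha, hb, by omega⟩
end
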